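/- arXiv:1501.01146 — 6 statements merged into one kernel-verified Lean document; each statement's English description precedes it below -/
import Mathlib

section
/- If Λ = {Λ_i ∈ B(X, Y_i)} is a pg-Bessel sequence for a Banach space X with bound B, and Θ = {Θ_i ∈ B(X, Y_i)} is a sequence of bounded operators such that (Σ_i ‖Λ_i − Θ_i‖^p)^{1/p} < K < ∞, then Θ is a pg-Bessel sequence for X with bound B + K. -/
open NormedSpace Filter

/-- The Banach-space adjoint (dual map) of a continuous linear map. -/
noncomputable def opAdj {X Y : Type*} [NormedAddCommGroup X] [NormedSpace ℝ X]
    [NormedAddCommGroup Y] [NormedSpace ℝ Y] (T : X →L[ℝ] Y) :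
    StrongDual ℝ Y →L[ℝ] StrongDual ℝ X :=
  (ContinuousLinearMap.compL ℝ X Y ℝ).flip T

/-!
Write `Θᵢ x = Λᵢ x - (Λᵢ - Θᵢ) x`, so that `‖Θᵢ x‖ ≤ ‖Λᵢ x‖ + ‖Λᵢ - Θᵢ‖ ‖x‖`. Minkowski's
inequality in `ℓ^p` bounds the `ℓ^p`-norm of the right-hand side by `B ‖x‖ + K ‖x‖`.
-/

namespace Real

variable {ι : Type*} {p : ℝ}

theorem Lp_le_tsum_of_nonneg_of_le_add (hp : 1 ≤ p) {f g h : ι → ℝ} (hf : ∀ i, 0 ≤ f i)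
    (hg : ∀ i, 0 ≤ g i) (hh : ∀ i, 0 ≤ h i) (hhfg : ∀ i, h i ≤ f i + g i)
    (hf_sum : Summable fun i => f i ^ p) (hg_sum : Summable fun i => g i ^ p) :
    (Summable fun i => h i ^ p) ∧
      (∑' i, h i ^ p) ^ (1 / p) ≤ (∑' i, f i ^ p) ^ (1 / p) + (∑' i, g i ^ p) ^ (1 / p) := by
  have hp0 : 0 ≤ p := zero_le_one.trans hp
  obtain ⟨hfg_sum, hfg_le⟩ := Lp_add_le_tsum_of_nonneg hp hf hg hf_sum hg_sum
  have hpow_le : ∀ i, h i ^ p ≤ (f i + g i) ^ p := fun i => rpow_le_rpow (hh i) (hhfg i) hp0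
  have hh_sum : Summable fun i => h i ^ p :=
    hfg_sum.of_nonneg_of_le (fun i => rpow_nonneg (hh i) p) hpow_le
  refine ⟨hh_sum, le_trans ?_ hfg_le⟩
  exact rpow_le_rpow (tsum_nonneg fun i => rpow_nonneg (hh i) p)
    (hh_sum.tsum_le_tsum hpow_le hfg_sum) (one_div_nonneg.2 hp0)

theorem tsum_mul_right_rpow_one_div (hp : p ≠ 0) {a : ι → ℝ} (ha : ∀ i, 0 ≤ a i) {c : ℝ}
    (hc : 0 ≤ c) : (∑' i, (a i * c) ^ p) ^ (1 / p) = (∑' i, a i ^ p) ^ (1 / p) * c := by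
  simp_rw [mul_rpow (ha _) hc, tsum_mul_right]
  rw [mul_rpow (tsum_nonneg fun i => rpow_nonneg (ha i) p) (rpow_nonneg hc p),
    one_div, rpow_rpow_inv hc hp]

end Real

theorem ContinuousLinearMap.norm_apply_le_add_opNorm_sub {𝕜 E F : Type*}
    [NontriviallyNormedField 𝕜] [SeminormedAddCommGroup E] [SeminormedAddCommGroup F] [NormedSpace 𝕜 E] [NormedSpace 𝕜 F]
    (Λ Θ : E →L[𝕜] F) (x : E) : ‖Θ x‖ ≤ ‖Λ x‖ + ‖Λ - Θ‖ * ‖x‖ :=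
  calc ‖Θ x‖ = ‖Λ x - (Λ - Θ) x‖ := by simp
    _ ≤ ‖Λ x‖ + ‖(Λ - Θ) x‖ := norm_sub_le _ _
    _ ≤ ‖Λ x‖ + ‖Λ - Θ‖ * ‖x‖ := by gcongr; exact (Λ - Θ).le_opNorm x

theorem pgBessel_perturbation_general
    {X : Type*} [NormedAddCommGroup X] [NormedSpace ℝ X]
    {Y : ℕ → Type*} [∀ i, NormedAddCommGroup (Y i)] [∀ i, NormedSpace ℝ (Y i)]
    (p : ℝ) (hp : 1 < p)
    (Λ Θ : ∀ i, X →L[ℝ] Y i) (B K : ℝ)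
    (hBessel : ∀ x : X, Summable (fun i => ‖Λ i x‖ ^ p) ∧
      (∑' i, ‖Λ i x‖ ^ p) ^ (1 / p) ≤ B * ‖x‖)
    (hKsum : Summable (fun i => ‖Λ i - Θ i‖ ^ p))
    (hK : (∑' i, ‖Λ i - Θ i‖ ^ p) ^ (1 / p) < K) :
    ∀ x : X, Summable (fun i => ‖Θ i x‖ ^ p) ∧
      (∑' i, ‖Θ i x‖ ^ p) ^ (1 / p) ≤ (B + K) * ‖x‖ := by
  intro x
  obtain ⟨hΛ_sum, hΛ_le⟩ := hBessel x
  have hdiff_sum : Summable fun i => (‖Λ i - Θ i‖ * ‖x‖) ^ p := by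
    simp_rw [Real.mul_rpow (norm_nonneg _) (norm_nonneg x)]
    exact hKsum.mul_right _
  obtain ⟨hΘ_sum, hΘ_le⟩ := Real.Lp_le_tsum_of_nonneg_of_le_add hp.le (fun i => norm_nonneg _)
    (fun i => by positivity) (fun i => norm_nonneg _)
    (fun i => (Λ i).norm_apply_le_add_opNorm_sub (Θ i) x) hΛ_sum hdiff_sum
  refine ⟨hΘ_sum, hΘ_le.trans ?_⟩
  rw [Real.tsum_mul_right_rpow_one_div (by linarith) (fun i => norm_nonneg _) (norm_nonneg x),
    add_mul]
  gcongr

/-- If `Λ` is a pg-Bessel sequence for `X` with bound `B` and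
`(Σ‖Λᵢ − Θᵢ‖^p)^(1/p) < K`, then `Θ` is a pg-Bessel sequence with bound `B + K`. -/
theorem pgBessel_perturbation
    {X : Type*} [NormedAddCommGroup X] [NormedSpace ℝ X] [CompleteSpace X]
    {Y : ℕ → Type*} [∀ i, NormedAddCommGroup (Y i)] [∀ i, NormedSpace ℝ (Y i)]
    [∀ i, CompleteSpace (Y i)]
    (p : ℝ) (hp : 1 < p)
    (Λ Θ : ∀ i, X →L[ℝ] Y i) (B K : ℝ) (hB : 0 < B)
    (hBessel : ∀ x : X, Summable (fun i => ‖Λ i x‖ ^ p) ∧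
      (∑' i, ‖Λ i x‖ ^ p) ^ (1 / p) ≤ B * ‖x‖)
    (hKsum : Summable (fun i => ‖Λ i - Θ i‖ ^ p))
    (hK : (∑' i, ‖Λ i - Θ i‖ ^ p) ^ (1 / p) < K) :
    ∀ x : X, Summable (fun i => ‖Θ i x‖ ^ p) ∧
      (∑' i, ‖Θ i x‖ ^ p) ^ (1 / p) ≤ (B + K) * ‖x‖ :=
  pgBessel_perturbation_general p hp Λ Θ B K hBessel hKsum hK
end

section
/- Let Λ be a pg-Bessel sequence with bound B, and for each n let Θ^(n) = {Θ^(n)_i ∈ B(X, Y_i)} satisfy: for all ε > 0 there is N with (Σ_i ‖Λ_i − Θ^(n)_i‖^p)^{1/p} < ε for all n ≥ N. Then each Θ^(n) is a pg-Bessel sequence and for n ≥ N, ‖U_{Θ^(n)} − U_Λ‖ ≤ ε and ‖T_{Θ^(n)} − T_Λ‖ ≤ ε. -/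
open NormedSpace Filter

/-!
If `Σᵢ ‖Λᵢ − Θᵢ‖^p ≤ ε^p`, then `Γ = Θ − Λ` is itself a pg-Bessel sequence with bound `ε`,
because `‖Γᵢ x‖ ≤ ‖Γᵢ‖ ‖x‖`; Minkowski's inequality then gives the bound `B + ε` for
`Θ = Λ + Γ`. On the synthesis side `‖Γᵢ^* gᵢ‖ ≤ ‖Γᵢ‖ ‖gᵢ‖`, and Hölder's inequality bounds
`Σᵢ ‖Γᵢ‖ ‖gᵢ‖` by `ε ‖g‖_q`.
-/

section RpowSum

variable {ι : Type*} {p : ℝ}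

lemma summable_rpow_and_tsum_rpow_le_of_le {f g : ι → ℝ} (hp : 0 < p) (hf : ∀ i, 0 ≤ f i)
    (hfg : ∀ i, f i ≤ g i) (hg : Summable fun i => g i ^ p) :
    Summable (fun i => f i ^ p) ∧ (∑' i, f i ^ p) ^ (1 / p) ≤ (∑' i, g i ^ p) ^ (1 / p) := by
  have hle : ∀ i, f i ^ p ≤ g i ^ p := fun i => Real.rpow_le_rpow (hf i) (hfg i) hp.le
  have hsum : Summable fun i => f i ^ p :=
    hg.of_nonneg_of_le (fun i => Real.rpow_nonneg (hf i) p) hle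
  refine ⟨hsum, Real.rpow_le_rpow (tsum_nonneg fun i => Real.rpow_nonneg (hf i) p)
    (hsum.tsum_le_tsum hle hg) (by positivity)⟩

lemma tsum_mul_const_rpow_rpow_inv {f : ι → ℝ} {c : ℝ} (hp : 0 < p) (hf : ∀ i, 0 ≤ f i)
    (hc : 0 ≤ c) : (∑' i, (f i * c) ^ p) ^ (1 / p) = (∑' i, f i ^ p) ^ (1 / p) * c := by
  simp_rw [Real.mul_rpow (hf _) hc, tsum_mul_right]
  rw [Real.mul_rpow (tsum_nonneg fun i => Real.rpow_nonneg (hf i) p) (Real.rpow_nonneg hc p),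
    ← Real.rpow_mul hc, mul_one_div_cancel hp.ne', Real.rpow_one]

end RpowSum

section PgBessel

variable {ι X : Type*} [NormedAddCommGroup X] [NormedSpace ℝ X]
  {Y : ι → Type*} [∀ i, NormedAddCommGroup (Y i)] [∀ i, NormedSpace ℝ (Y i)] {p : ℝ}

/-- `Λ` is a pg-Bessel sequence with bound `B`: its analysis operator `x ↦ (Λᵢ x)ᵢ` maps
into `(Σᵢ ⊕ Yᵢ)_{ℓ^p}` with norm at most `B`. -/
def IsPgBesselWith (p : ℝ) (Λ : ∀ i, X →L[ℝ] Y i) (B : ℝ) : Prop :=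
  ∀ x : X, Summable (fun i => ‖Λ i x‖ ^ p) ∧ (∑' i, ‖Λ i x‖ ^ p) ^ (1 / p) ≤ B * ‖x‖

lemma IsPgBesselWith.mono {Λ : ∀ i, X →L[ℝ] Y i} {B C : ℝ} (hΛ : IsPgBesselWith p Λ B)
    (hBC : B ≤ C) : IsPgBesselWith p Λ C :=
  fun x => ⟨(hΛ x).1, (hΛ x).2.trans (mul_le_mul_of_nonneg_right hBC (norm_nonneg x))⟩

lemma IsPgBesselWith.add {Λ Γ : ∀ i, X →L[ℝ] Y i} {B C : ℝ} (hp : 1 ≤ p)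
    (hΛ : IsPgBesselWith p Λ B) (hΓ : IsPgBesselWith p Γ C) :
    IsPgBesselWith p (Λ + Γ) (B + C) := by
  intro x
  obtain ⟨hΛs, hΛb⟩ := hΛ x
  obtain ⟨hΓs, hΓb⟩ := hΓ x
  obtain ⟨hsum, hmink⟩ := Real.Lp_add_le_tsum_of_nonneg hp (fun i => norm_nonneg (Λ i x))
    (fun i => norm_nonneg (Γ i x)) hΛs hΓs
  obtain ⟨hs, hle⟩ := summable_rpow_and_tsum_rpow_le_of_le (by linarith)
    (fun i => norm_nonneg ((Λ + Γ) i x)) (fun i => norm_add_le (Λ i x) (Γ i x)) hsum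
  refine ⟨hs, ?_⟩
  calc (∑' i, ‖(Λ + Γ) i x‖ ^ p) ^ (1 / p)
      ≤ (∑' i, ‖Λ i x‖ ^ p) ^ (1 / p) + (∑' i, ‖Γ i x‖ ^ p) ^ (1 / p) := hle.trans hmink
    _ ≤ (B + C) * ‖x‖ := by rw [add_mul]; exact add_le_add hΛb hΓb

lemma isPgBesselWith_of_summable_norm_rpow {Γ : ∀ i, X →L[ℝ] Y i} (hp : 0 < p)
    (hΓ : Summable fun i => ‖Γ i‖ ^ p) :
    IsPgBesselWith p Γ ((∑' i, ‖Γ i‖ ^ p) ^ (1 / p)) := by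
  intro x
  have hΓx : Summable fun i => (‖Γ i‖ * ‖x‖) ^ p := by
    simpa only [Real.mul_rpow (norm_nonneg _) (norm_nonneg x)] using hΓ.mul_right (‖x‖ ^ p)
  obtain ⟨hs, hle⟩ := summable_rpow_and_tsum_rpow_le_of_le hp (fun i => norm_nonneg (Γ i x))
    (fun i => (Γ i).le_opNorm x) hΓx
  exact ⟨hs, hle.trans_eq (tsum_mul_const_rpow_rpow_inv hp (fun i => norm_nonneg _)
    (norm_nonneg x))⟩

end PgBessel

section Synthesis

variable {X Y : Type*} [NormedAddCommGroup X] [NormedSpace ℝ X]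
  [NormedAddCommGroup Y] [NormedSpace ℝ Y]

lemma opAdj_apply (T : X →L[ℝ] Y) (g : StrongDual ℝ Y) : opAdj T g = g.comp T := rfl

lemma opAdj_sub (S T : X →L[ℝ] Y) : opAdj (S - T) = opAdj S - opAdj T :=
  map_sub (ContinuousLinearMap.compL ℝ X Y ℝ).flip S T

lemma norm_opAdj_apply_le (T : X →L[ℝ] Y) (g : StrongDual ℝ Y) :
    ‖opAdj T g‖ ≤ ‖T‖ * ‖g‖ := by
  rw [opAdj_apply, mul_comm]
  exact g.opNorm_comp_le T

variable {ι : Type*} {Z : ι → Type*} [∀ i, NormedAddCommGroup (Z i)] [∀ i, NormedSpace ℝ (Z i)]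

lemma summable_and_norm_tsum_opAdj_le {p q : ℝ} (hpq : p.HolderConjugate q)
    {Γ : ∀ i, X →L[ℝ] Z i} (hΓ : Summable fun i => ‖Γ i‖ ^ p)
    {g : ∀ i, StrongDual ℝ (Z i)} (hg : Summable fun i => ‖g i‖ ^ q) :
    Summable (fun i => opAdj (Γ i) (g i)) ∧
      ‖∑' i, opAdj (Γ i) (g i)‖ ≤ (∑' i, ‖Γ i‖ ^ p) ^ (1 / p) * (∑' i, ‖g i‖ ^ q) ^ (1 / q) := by
  obtain ⟨hprod, hholder⟩ := Real.summable_and_inner_le_Lp_mul_Lq_tsum_of_nonneg hpq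
    (fun i => norm_nonneg (Γ i)) (fun i => norm_nonneg (g i)) hΓ hg
  have hnorm : Summable fun i => ‖opAdj (Γ i) (g i)‖ :=
    hprod.of_nonneg_of_le (fun i => norm_nonneg _) fun i => norm_opAdj_apply_le _ _
  refine ⟨hnorm.of_norm, ?_⟩
  calc ‖∑' i, opAdj (Γ i) (g i)‖
      ≤ ∑' i, ‖opAdj (Γ i) (g i)‖ := norm_tsum_le_tsum_norm hnorm
    _ ≤ ∑' i, ‖Γ i‖ * ‖g i‖ := hnorm.tsum_le_tsum (fun i => norm_opAdj_apply_le _ _) hprod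
    _ ≤ _ := hholder

end Synthesis

theorem pgBessel_approx_analysis_synthesis_general
    {X : Type*} [NormedAddCommGroup X] [NormedSpace ℝ X]
    {Y : ℕ → Type*} [∀ i, NormedAddCommGroup (Y i)] [∀ i, NormedSpace ℝ (Y i)]
    (p q : ℝ) (hp : 1 < p) (hpq : 1 / p + 1 / q = 1)
    (Λ : ∀ i, X →L[ℝ] Y i) (Θ : ℕ → ∀ i, X →L[ℝ] Y i) (B : ℝ) (hB : 0 < B)
    (hBessel : ∀ x : X, Summable (fun i => ‖Λ i x‖ ^ p) ∧
      (∑' i, ‖Λ i x‖ ^ p) ^ (1 / p) ≤ B * ‖x‖)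
    (happrox : ∀ ε > (0 : ℝ), ∃ N : ℕ, ∀ n ≥ N,
      Summable (fun i => ‖Λ i - Θ n i‖ ^ p) ∧
      (∑' i, ‖Λ i - Θ n i‖ ^ p) ^ (1 / p) < ε) :
    ∀ ε > (0 : ℝ), ∃ N : ℕ, ∀ n ≥ N,
      -- `Θ⁽ⁿ⁾` is a pg-Bessel sequence
      (∃ C > (0 : ℝ), ∀ x : X, Summable (fun i => ‖Θ n i x‖ ^ p) ∧
        (∑' i, ‖Θ n i x‖ ^ p) ^ (1 / p) ≤ C * ‖x‖) ∧
      -- `‖U_{Θ⁽ⁿ⁾} − U_Λ‖ ≤ ε`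
      (∀ x : X, Summable (fun i => ‖Θ n i x - Λ i x‖ ^ p) ∧
        (∑' i, ‖Θ n i x - Λ i x‖ ^ p) ^ (1 / p) ≤ ε * ‖x‖) ∧
      -- `‖T_{Θ⁽ⁿ⁾} − T_Λ‖ ≤ ε`
      (∀ g : ∀ i, StrongDual ℝ (Y i), Summable (fun i => ‖g i‖ ^ q) →
        Summable (fun i => opAdj (Θ n i) (g i) - opAdj (Λ i) (g i)) ∧
        ‖∑' i, (opAdj (Θ n i) (g i) - opAdj (Λ i) (g i))‖ ≤
          ε * (∑' i, ‖g i‖ ^ q) ^ (1 / q)) := by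
  intro ε hε
  obtain ⟨N, hN⟩ := happrox ε hε
  refine ⟨N, fun n hn => ?_⟩
  obtain ⟨hsum, hlt⟩ := hN n hn
  have hsum' : Summable fun i => ‖(Θ n - Λ) i‖ ^ p := by
    simpa only [Pi.sub_apply, norm_sub_rev] using hsum
  have hlt' : (∑' i, ‖(Θ n - Λ) i‖ ^ p) ^ (1 / p) ≤ ε := by
    simpa only [Pi.sub_apply, norm_sub_rev] using hlt.le
  have hdiff : IsPgBesselWith p (Θ n - Λ) ε :=
    (isPgBesselWith_of_summable_norm_rpow (by linarith) hsum').mono hlt'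
  have hΘ : IsPgBesselWith p (Θ n) (B + ε) := by
    simpa only [add_sub_cancel] using IsPgBesselWith.add hp.le hBessel hdiff
  have hconj : p.HolderConjugate q :=
    Real.holderConjugate_iff.mpr ⟨hp, by simpa only [one_div] using hpq⟩
  refine ⟨⟨B + ε, by linarith, hΘ⟩, hdiff, fun g hg => ?_⟩
  obtain ⟨hs, hle⟩ := summable_and_norm_tsum_opAdj_le hconj hsum' hg
  simp only [Pi.sub_apply, opAdj_sub, sub_apply] at hs hle
  exact ⟨hs, hle.trans (mul_le_mul_of_nonneg_right hlt' (by positivity))⟩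

/-- If `Θ⁽ⁿ⁾` converges to the pg-Bessel sequence `Λ` in the sense that
for all `ε > 0` there is `N` with `(Σᵢ‖Λᵢ − Θ⁽ⁿ⁾ᵢ‖^p)^(1/p) < ε` for `n ≥ N`, then the
`Θ⁽ⁿ⁾` are pg-Bessel sequences and, for `n ≥ N`, `‖U_{Θ⁽ⁿ⁾} − U_Λ‖ ≤ ε` and
`‖T_{Θ⁽ⁿ⁾} − T_Λ‖ ≤ ε` (stated pointwise for the analysis and synthesis operators). -/
theorem pgBessel_approx_analysis_synthesis
    {X : Type*} [NormedAddCommGroup X] [NormedSpace ℝ X] [CompleteSpace X]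
    {Y : ℕ → Type*} [∀ i, NormedAddCommGroup (Y i)] [∀ i, NormedSpace ℝ (Y i)]
    [∀ i, CompleteSpace (Y i)]
    (p q : ℝ) (hp : 1 < p) (hpq : 1 / p + 1 / q = 1)
    (Λ : ∀ i, X →L[ℝ] Y i) (Θ : ℕ → ∀ i, X →L[ℝ] Y i) (B : ℝ) (hB : 0 < B)
    (hBessel : ∀ x : X, Summable (fun i => ‖Λ i x‖ ^ p) ∧
      (∑' i, ‖Λ i x‖ ^ p) ^ (1 / p) ≤ B * ‖x‖)
    (happrox : ∀ ε > (0 : ℝ), ∃ N : ℕ, ∀ n ≥ N,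
      Summable (fun i => ‖Λ i - Θ n i‖ ^ p) ∧
      (∑' i, ‖Λ i - Θ n i‖ ^ p) ^ (1 / p) < ε) :
    ∀ ε > (0 : ℝ), ∃ N : ℕ, ∀ n ≥ N,
      -- `Θ⁽ⁿ⁾` is a pg-Bessel sequence
      (∃ C > (0 : ℝ), ∀ x : X, Summable (fun i => ‖Θ n i x‖ ^ p) ∧
        (∑' i, ‖Θ n i x‖ ^ p) ^ (1 / p) ≤ C * ‖x‖) ∧
      -- `‖U_{Θ⁽ⁿ⁾} − U_Λ‖ ≤ ε`
      (∀ x : X, Summable (fun i => ‖Θ n i x - Λ i x‖ ^ p) ∧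
        (∑' i, ‖Θ n i x - Λ i x‖ ^ p) ^ (1 / p) ≤ ε * ‖x‖) ∧
      -- `‖T_{Θ⁽ⁿ⁾} − T_Λ‖ ≤ ε`
      (∀ g : ∀ i, StrongDual ℝ (Y i), Summable (fun i => ‖g i‖ ^ q) →
        Summable (fun i => opAdj (Θ n i) (g i) - opAdj (Λ i) (g i)) ∧
        ‖∑' i, (opAdj (Θ n i) (g i) - opAdj (Λ i) (g i))‖ ≤
          ε * (∑' i, ‖g i‖ ^ q) ^ (1 / q)) :=
  pgBessel_approx_analysis_synthesis_general p q hp hpq Λ Θ B hB hBessel happrox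
end

section
/- If Λ = {Λ_i ∈ B(X, Y_i)} is a pg-frame for X and all Y_i are reflexive, then the adjoint of the synthesis operator T_Λ equals the analysis operator U_Λ (under the identification of ((Σ_i ⊕ Y_i^*)_{ℓ^q})^* with (Σ_i ⊕ Y_i)_{ℓ^p} and of X^** with X). -/
/-!
The synthesis operator factors as `T_Λ = U_Λ* ∘ P`, where `U_Λ x = (Λᵢ x)ᵢ ∈ ℓ^p(Yᵢ)` is bounded
by the upper frame bound and `P : ℓ^q(Yᵢ*) → ℓ^p(Yᵢ)*` is the Hölder duality pairing. Then
`T_Λ*(x)(G) = P G (U_Λ x) = ∑ᵢ Gᵢ(Λᵢ x)` holds by construction, and since `q < ∞` every `G` is the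
sum of its coordinates `single i Gᵢ` in `ℓ^q`, so continuity of `T_Λ` makes `∑ᵢ Λᵢ* Gᵢ` converge
to `T_Λ G`.
-/

open NormedSpace Filter

open scoped ENNReal NNReal

theorem lp.dualPairing_single {ι 𝕜 : Type*} {E F : ι → Type*} [RCLike 𝕜]
    [∀ i, NormedAddCommGroup (E i)] [∀ i, NormedSpace 𝕜 (E i)]
    [∀ i, NormedAddCommGroup (F i)] [∀ i, NormedSpace 𝕜 (F i)]
    {H : Type*} [NormedAddCommGroup H] [NormedSpace 𝕜 H] [CompleteSpace H] [DecidableEq ι]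
    {p q : ℝ≥0∞} [Fact (1 ≤ p)] [Fact (1 ≤ q)] [p.HolderConjugate q]
    (B : (i : ι) → E i →L[𝕜] F i →L[𝕜] H) {K : ℝ≥0} (hBK : ∀ i, ‖B i‖ ≤ K)
    (i : ι) (e : E i) (f : lp F q) :
    lp.dualPairing p q B hBK (lp.single p i e) f = B i e (f i) := by
  rw [lp.dualPairing_apply, tsum_eq_single i fun j hj => by
    rw [lp.single_apply_ne p i e hj, map_zero, zero_apply],
    lp.single_apply_self]

theorem ENNReal.toReal_ofReal_of_one_le_ofReal {p : ℝ} (hp : 1 ≤ ENNReal.ofReal p) :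
    (ENNReal.ofReal p).toReal = p :=
  ENNReal.toReal_ofReal (zero_le_one.trans (ENNReal.one_le_ofReal.1 hp))

section Bessel

variable {𝕜 ι X : Type*} [NontriviallyNormedField 𝕜] [NormedAddCommGroup X] [NormedSpace 𝕜 X]
  {Y : ι → Type*} [∀ i, NormedAddCommGroup (Y i)] [∀ i, NormedSpace 𝕜 (Y i)] {p : ℝ}

/-- `Λ` is a pg-Bessel family with bound `B`: the upper half of the pg-frame inequality. -/
def IsPgBessel (p : ℝ) (Λ : ∀ i, X →L[𝕜] Y i) (B : ℝ) : Prop :=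
  ∀ x, Summable (fun i => ‖Λ i x‖ ^ p) ∧ (∑' i, ‖Λ i x‖ ^ p) ^ (1 / p) ≤ B * ‖x‖

namespace IsPgBessel

variable [hp : Fact (1 ≤ ENNReal.ofReal p)] {Λ : ∀ i, X →L[𝕜] Y i} {B : ℝ}

theorem memℓp (h : IsPgBessel p Λ B) (x : X) : Memℓp (fun i => Λ i x) (ENNReal.ofReal p) :=
  memℓp_gen (by simpa only [ENNReal.toReal_ofReal_of_one_le_ofReal hp.out] using (h x).1)

noncomputable def analysis (h : IsPgBessel p Λ B) : X →L[𝕜] lp Y (ENNReal.ofReal p) :=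
  LinearMap.mkContinuous
    { toFun x := ⟨fun i => Λ i x, h.memℓp x⟩
      map_add' x y := by ext i; exact map_add (Λ i) x y
      map_smul' c x := by ext i; exact map_smul (Λ i) c x }
    B fun x => by
      have hp_pos : 0 < (ENNReal.ofReal p).toReal :=
        ENNReal.toReal_pos (zero_lt_one.trans_le hp.out).ne' ENNReal.ofReal_ne_top
      rw [lp.norm_eq_tsum_rpow hp_pos, ENNReal.toReal_ofReal_of_one_le_ofReal hp.out]
      exact (h x).2

end IsPgBessel

end Bessel

theorem synthesis_adjoint_eq_analysis_general
    {X : Type*} [NormedAddCommGroup X] [NormedSpace ℝ X]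
    {Y : ℕ → Type*} [∀ i, NormedAddCommGroup (Y i)] [∀ i, NormedSpace ℝ (Y i)]
    (p q : ℝ) (hp : 1 < p) (hpq : 1 / p + 1 / q = 1)
    [Fact (1 ≤ ENNReal.ofReal q)]
    (Λ : ∀ i, X →L[ℝ] Y i) (A B : ℝ)
    (hframe : ∀ x : X, Summable (fun i => ‖Λ i x‖ ^ p) ∧
      A * ‖x‖ ≤ (∑' i, ‖Λ i x‖ ^ p) ^ (1 / p) ∧
      (∑' i, ‖Λ i x‖ ^ p) ^ (1 / p) ≤ B * ‖x‖) :
    ∃ T : lp (fun i => StrongDual ℝ (Y i)) (ENNReal.ofReal q) →L[ℝ] StrongDual ℝ X,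
      (∀ G : lp (fun i => StrongDual ℝ (Y i)) (ENNReal.ofReal q),
        Summable (fun i => opAdj (Λ i) ((G : ∀ i, StrongDual ℝ (Y i)) i)) ∧
        T G = ∑' i, opAdj (Λ i) ((G : ∀ i, StrongDual ℝ (Y i)) i)) ∧
      ∀ (x : X) (G : lp (fun i => StrongDual ℝ (Y i)) (ENNReal.ofReal q)),
        opAdj T (inclusionInDoubleDual ℝ X x) G = ∑' i, (G : ∀ i, StrongDual ℝ (Y i)) i (Λ i x) := by
  have hpq' : p.HolderConjugate q := Real.holderConjugate_iff.2 ⟨hp, by simpa only [one_div] using hpq⟩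
  have : Fact (1 ≤ ENNReal.ofReal p) := ⟨ENNReal.one_le_ofReal.2 hp.le⟩
  have := hpq'.symm.ennrealOfReal
  have hΛ : IsPgBessel p Λ B := fun x => ⟨(hframe x).1, (hframe x).2.2⟩
  let pairing := lp.dualPairing (ENNReal.ofReal q) (ENNReal.ofReal p)
    (fun i => ContinuousLinearMap.id ℝ (StrongDual ℝ (Y i))) (K := 1)
    fun _ => ContinuousLinearMap.norm_id_le
  let T := opAdj hΛ.analysis ∘L pairing
  have hT_single : ∀ i (g : StrongDual ℝ (Y i)),
      T (lp.single (ENNReal.ofReal q) i g) = opAdj (Λ i) g := fun i g => by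
    ext x
    exact lp.dualPairing_single (fun i => ContinuousLinearMap.id ℝ (StrongDual ℝ (Y i))) _ i g
      (hΛ.analysis x)
  refine ⟨T, fun G => ?_, fun x G => lp.dualPairing_apply _ _ G (hΛ.analysis x)⟩
  have hT_sum := (lp.hasSum_single ENNReal.ofReal_ne_top G).mapL T
  simp only [hT_single] at hT_sum
  exact ⟨hT_sum.summable, hT_sum.tsum_eq.symm⟩

/-- if `Λ` is a pg-frame for `X` and all `Yᵢ` are reflexive, then the
adjoint of the synthesis operator `T_Λ : (Σᵢ ⊕ Yᵢ*)_{ℓᑫ} → X*` equals the analysis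
operator `U_Λ`, under the identification of `((Σᵢ ⊕ Yᵢ*)_{ℓᑫ})*` with `(Σᵢ ⊕ Yᵢ)_{ℓᵖ}`
and of `X**` with `X`: for every `x ∈ X` the functional `T_Λ*(x)` acts on
`G ∈ (Σᵢ ⊕ Yᵢ*)_{ℓᑫ}` as `Σᵢ Gᵢ(Λᵢ x)`, i.e. as `U_Λ x`. -/
theorem synthesis_adjoint_eq_analysis
    {X : Type*} [NormedAddCommGroup X] [NormedSpace ℝ X] [CompleteSpace X]
    {Y : ℕ → Type*} [∀ i, NormedAddCommGroup (Y i)] [∀ i, NormedSpace ℝ (Y i)]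
    [∀ i, CompleteSpace (Y i)]
    (p q : ℝ) (hp : 1 < p) (hpq : 1 / p + 1 / q = 1)
    [Fact (1 ≤ ENNReal.ofReal q)]
    (Λ : ∀ i, X →L[ℝ] Y i) (A B : ℝ) (hA : 0 < A) (hB : 0 < B)
    (hframe : ∀ x : X, Summable (fun i => ‖Λ i x‖ ^ p) ∧
      A * ‖x‖ ≤ (∑' i, ‖Λ i x‖ ^ p) ^ (1 / p) ∧
      (∑' i, ‖Λ i x‖ ^ p) ^ (1 / p) ≤ B * ‖x‖)
    (hrefl : ∀ i, Function.Surjective (inclusionInDoubleDual ℝ (Y i))) :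
    ∃ T : lp (fun i => StrongDual ℝ (Y i)) (ENNReal.ofReal q) →L[ℝ] StrongDual ℝ X,
      (∀ G : lp (fun i => StrongDual ℝ (Y i)) (ENNReal.ofReal q),
        Summable (fun i => opAdj (Λ i) ((G : ∀ i, StrongDual ℝ (Y i)) i)) ∧
        T G = ∑' i, opAdj (Λ i) ((G : ∀ i, StrongDual ℝ (Y i)) i)) ∧
      ∀ (x : X) (G : lp (fun i => StrongDual ℝ (Y i)) (ENNReal.ofReal q)),
        opAdj T (inclusionInDoubleDual ℝ X x) G = ∑' i, (G : ∀ i, StrongDual ℝ (Y i)) i (Λ i x) :=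
  synthesis_adjoint_eq_analysis_general p q hp hpq Λ A B hframe
end

section
/- Λ = {Λ_i ∈ B(X, Y_i)} is a pg-frame for X with respect to {Y_i} if and only if the synthesis operator T_Λ : (Σ_i ⊕ Y_i^*)_{ℓ^q} → X^*, T_Λ{g_i} = Σ_i Λ_i^* g_i, is bounded and surjective. -/
open NormedSpace Filter

/-!
If `Λ` is a pg-frame, Hölder's inequality bounds the synthesis operator `T` by the upper
frame bound. For surjectivity, the lower frame bound makes `f ∘ U⁻¹` a bounded functional on
the range of the analysis operator `U : X → ℓᵖ(Yᵢ)`; a Hahn–Banach extension `Φ` of it to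
`ℓᵖ(Yᵢ)` has coordinates `gᵢ = Φ ∘ singleᵢ` with `‖g‖_q ≤ ‖Φ‖`, and `T g = f`.

Conversely, pairing `T g` with `x` for finitely supported `gᵢ = cᵢ φᵢ`, where `φᵢ` norms
`Λᵢ x`, gives the upper frame bound, because a finite `ℓᵖ`-norm is the supremum of its
pairings with the unit ball of `ℓ^q`. The open mapping theorem for `T` on `ℓ^q(Yᵢ*)` gives
preimages of bounded norm of the functionals norming `x`; Hölder's inequality turns them into
the lower frame bound.
-/

open scoped ENNReal Topology

section Scalar

variable {ι : Type*}

theorem sum_rpow_rpow_le_of_forall_sum_mul_le {p q : ℝ} (hpq : p.HolderConjugate q)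
    {s : Finset ι} {a : ι → ℝ} (ha : ∀ i, 0 ≤ a i) {M : ℝ} (hM : 0 ≤ M)
    (h : ∀ c : ι → ℝ, (∀ i, 0 ≤ c i) →
      ∑ i ∈ s, c i * a i ≤ M * (∑ i ∈ s, c i ^ p) ^ (1 / p)) :
    (∑ i ∈ s, a i ^ q) ^ (1 / q) ≤ M := by
  set S := ∑ i ∈ s, a i ^ q
  have hS₀ : 0 ≤ S := Finset.sum_nonneg fun i _ => Real.rpow_nonneg (ha i) q
  rcases hS₀.eq_or_lt with hS | hS
  · rw [← hS, Real.zero_rpow (one_div_ne_zero hpq.symm.ne_zero)]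
    exact hM
  -- test against `c = a ^ (q - 1)`, the extremiser of Hölder's inequality
  have hmul : ∀ i, a i ^ (q - 1) * a i = a i ^ q := fun i => by
    rw [← Real.rpow_add_one' (ha i) (by linarith [hpq.symm.pos]), sub_add_cancel]
  have hpow : ∀ i, (a i ^ (q - 1)) ^ p = a i ^ q := fun i => by
    rw [← Real.rpow_mul (ha i), hpq.symm.sub_one_mul_conj]
  have hSM : S ≤ M * S ^ (1 / p) := by
    simpa only [hmul, hpow] using h (fun i => a i ^ (q - 1)) fun i => Real.rpow_nonneg (ha i) _
  have hsplit : S ^ (1 / p) * S ^ (1 / q) = S := by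
    rw [← Real.rpow_add hS, one_div, one_div, hpq.inv_add_inv_eq_one, Real.rpow_one]
  refine le_of_mul_le_mul_left ?_ (Real.rpow_pos_of_pos hS (1 / p))
  rw [hsplit, mul_comm]
  exact hSM

theorem summable_and_tsum_rpow_le_iff {a : ι → ℝ} (ha : ∀ i, 0 ≤ a i) {p M : ℝ} (hp : 0 < p)
    (hM : 0 ≤ M) :
    (Summable a ∧ (∑' i, a i) ^ (1 / p) ≤ M) ↔
      ∀ s : Finset ι, (∑ i ∈ s, a i) ^ (1 / p) ≤ M := by
  simp only [one_div, Real.rpow_inv_le_iff_of_pos (Finset.sum_nonneg fun i _ => ha i) hM hp,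
    Real.rpow_inv_le_iff_of_pos (tsum_nonneg ha) hM hp]
  exact ⟨fun h s => (h.1.sum_le_tsum s fun i _ => ha i).trans h.2,
    fun h => ⟨summable_of_sum_le ha h, Real.tsum_le_of_sum_le ha h⟩⟩

theorem summable_and_norm_tsum_le_of_norm_sum_le {E : Type*} [NormedAddCommGroup E]
    [CompleteSpace E] {f : ι → E} {b : ι → ℝ} (hb₀ : ∀ i, 0 ≤ b i) (hb : Summable b)
    {C r : ℝ} (hC : 0 ≤ C) (hr : 0 < r) (h : ∀ s, ‖∑ i ∈ s, f i‖ ≤ C * (∑ i ∈ s, b i) ^ r) :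
    Summable f ∧ ‖∑' i, f i‖ ≤ C * (∑' i, b i) ^ r := by
  have hf : Summable f := by
    refine summable_iff_vanishing_norm.2 fun ε hε => ?_
    have hcont : Tendsto (fun y : ℝ => C * y ^ r) (𝓝 0) (𝓝 0) := by
      simpa [Real.zero_rpow hr.ne'] using
        ((Real.continuous_rpow_const hr.le).tendsto 0).const_mul C
    obtain ⟨δ, hδ, hCδ⟩ := Metric.tendsto_nhds_nhds.1 hcont ε hε
    obtain ⟨s, hs⟩ := summable_iff_vanishing_norm.1 hb δ hδ
    refine ⟨s, fun t ht => (h t).trans_lt ?_⟩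
    have := hCδ (by simpa using hs t ht)
    simpa [Real.dist_eq, abs_lt] using (abs_lt.1 this).2
  refine ⟨hf, le_of_tendsto' hf.hasSum.norm fun s => (h s).trans ?_⟩
  gcongr
  · exact Finset.sum_nonneg fun i _ => hb₀ i
  · exact hb.sum_le_tsum s fun i _ => hb₀ i

end Scalar

section Functional

variable {𝕜 X E : Type*} [RCLike 𝕜] [NormedAddCommGroup X] [NormedSpace 𝕜 X]
  [NormedAddCommGroup E] [NormedSpace 𝕜 E]

theorem exists_strongDual_apply_eq_of_mul_norm_le (U : X →ₗ[𝕜] E) {A : ℝ} (hA : 0 < A)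
    (hU : ∀ x, A * ‖x‖ ≤ ‖U x‖) (f : StrongDual 𝕜 X) :
    ∃ Φ : StrongDual 𝕜 E, ∀ x, Φ (U x) = f x := by
  have hU' : ∀ x, ‖x‖ ≤ A⁻¹ * ‖U x‖ := fun x => by
    rw [le_inv_mul_iff₀ hA]; exact hU x
  have hinj : Function.Injective U := (injective_iff_map_eq_zero U).2 fun x hx =>
    norm_le_zero_iff.1 <| by simpa [hx] using hU' x
  let e := LinearEquiv.ofInjective U hinj
  let φ : StrongDual 𝕜 (LinearMap.range U) :=
    LinearMap.mkContinuous (f.toLinearMap ∘ₗ e.symm.toLinearMap) (‖f‖ * A⁻¹) fun u => by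
      calc ‖f (e.symm u)‖ ≤ ‖f‖ * ‖e.symm u‖ := f.le_opNorm _
        _ ≤ ‖f‖ * (A⁻¹ * ‖U (e.symm u)‖) := by gcongr; exact hU' _
        _ = ‖f‖ * A⁻¹ * ‖u‖ := by
          have hu : U (e.symm u) = u := congrArg Subtype.val (e.apply_symm_apply u)
          rw [hu, mul_assoc]; rfl
  obtain ⟨Φ, hΦ, -⟩ := exists_extension_norm_eq _ φ
  refine ⟨Φ, fun x => ?_⟩
  simpa [φ, e] using hΦ (e x)

theorem ContinuousLinearMap.exists_norm_le_apply_eq_norm_of_surjective {F : Type*}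
    [NormedAddCommGroup F] [NormedSpace 𝕜 F] [CompleteSpace F] (T : F →L[𝕜] StrongDual 𝕜 X)
    (hT : Function.Surjective T) : ∃ c > 0, ∀ x : X, ∃ e : F, ‖e‖ ≤ c ∧ T e x = ‖x‖ := by
  obtain ⟨c, hc, hpre⟩ := T.exists_preimage_norm_le hT
  refine ⟨c, hc, fun x => ?_⟩
  obtain ⟨f, hf, hfx⟩ := exists_dual_vector'' 𝕜 x
  obtain ⟨e, rfl, he⟩ := hpre f
  exact ⟨e, he.trans (mul_le_of_le_one_right hc.le hf), hfx⟩

end Functional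

theorem ContinuousLinearMap.exists_norm_le_one_mul_opNorm_le_apply {E : Type*}
    [NormedAddCommGroup E] [NormedSpace ℝ E] (f : StrongDual ℝ E) {t : ℝ} (ht : t < 1) :
    ∃ y : E, ‖y‖ ≤ 1 ∧ t * ‖f‖ ≤ f y := by
  rcases le_or_gt (t * ‖f‖) 0 with hle | hpos
  · exact ⟨0, by simp, by simpa using hle⟩
  have hf : 0 < ‖f‖ := (norm_nonneg f).lt_of_ne fun h => by simp [← h] at hpos
  have hlt : t * ‖f‖ < ‖f‖ := by nlinarith
  obtain ⟨y, hy, hfy⟩ := f.exists_lt_apply_of_lt_opNorm hlt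
  rcases le_or_gt 0 (f y) with hsign | hsign
  · exact ⟨y, hy.le, by rw [Real.norm_of_nonneg hsign] at hfy; exact hfy.le⟩
  · refine ⟨-y, by simpa using hy.le, ?_⟩
    rw [Real.norm_eq_abs, abs_of_neg hsign] at hfy
    simpa using hfy.le

theorem Real.le_of_forall_lt_one_mul_le {a b : ℝ} (h : ∀ t < 1, t * a ≤ b) : a ≤ b := by
  have hlim : Tendsto (fun t : ℝ => t * a) (𝓝 1) (𝓝 a) := by
    simpa using (continuous_mul_const a).tendsto 1
  exact le_of_tendsto (hlim.mono_left nhdsWithin_le_nhds)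
    (eventually_nhdsWithin_of_forall (s := Set.Iio 1) h)

section lp

variable {ι : Type*} [DecidableEq ι] {E : ι → Type*} [∀ i, NormedAddCommGroup (E i)]
  {P : ℝ≥0∞} [Fact (1 ≤ P)]

theorem lp.norm_sum_single_eq (hP : 0 < P.toReal) (f : ∀ i, E i) (s : Finset ι) :
    ‖∑ i ∈ s, lp.single P i (f i)‖ = (∑ i ∈ s, ‖f i‖ ^ P.toReal) ^ (1 / P.toReal) := by
  rw [← lp.norm_sum_single hP, one_div, Real.rpow_rpow_inv (norm_nonneg _) hP.ne']

variable [∀ i, NormedSpace ℝ (E i)]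

theorem lp.sum_norm_comp_single_rpow_le {q : ℝ} (hPq : P.toReal.HolderConjugate q)
    (Φ : StrongDual ℝ (lp E P)) (s : Finset ι) :
    (∑ i ∈ s, ‖Φ.comp (lp.singleContinuousLinearMap ℝ E P i)‖ ^ q) ^ (1 / q) ≤ ‖Φ‖ := by
  set g := fun i => Φ.comp (lp.singleContinuousLinearMap ℝ E P i)
  refine sum_rpow_rpow_le_of_forall_sum_mul_le hPq (fun i => norm_nonneg (g i)) (norm_nonneg Φ)
    fun c hc => Real.le_of_forall_lt_one_mul_le fun t ht => ?_
  choose y hy hgy using fun i => (g i).exists_norm_le_one_mul_opNorm_le_apply ht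
  have hz : ‖∑ i ∈ s, lp.single P i (c i • y i)‖ ≤
      (∑ i ∈ s, c i ^ P.toReal) ^ (1 / P.toReal) := by
    rw [lp.norm_sum_single_eq hPq.pos]
    gcongr with i
    rw [norm_smul, Real.norm_of_nonneg (hc i)]
    exact mul_le_of_le_one_right (hc i) (hy i)
  calc t * ∑ i ∈ s, c i * ‖g i‖ = ∑ i ∈ s, c i * (t * ‖g i‖) := by
        rw [Finset.mul_sum]; exact Finset.sum_congr rfl fun i _ => by ring
    _ ≤ ∑ i ∈ s, c i * g i (y i) := by gcongr with i; exacts [hc i, hgy i]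
    _ = Φ (∑ i ∈ s, lp.single P i (c i • y i)) := by simp [g, map_sum]
    _ ≤ ‖Φ‖ * ‖∑ i ∈ s, lp.single P i (c i • y i)‖ := (le_abs_self _).trans (Φ.le_opNorm _)
    _ ≤ ‖Φ‖ * (∑ i ∈ s, c i ^ P.toReal) ^ (1 / P.toReal) := by gcongr

end lp

section Frame

variable {ι X : Type*} [NormedAddCommGroup X] [NormedSpace ℝ X] {Y : ι → Type*}
  [∀ i, NormedAddCommGroup (Y i)] [∀ i, NormedSpace ℝ (Y i)] {Λ : ∀ i, X →L[ℝ] Y i} {p q : ℝ}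

theorem tsum_opAdj_apply {g : ∀ i, StrongDual ℝ (Y i)}
    (hg : Summable fun i => opAdj (Λ i) (g i)) (x : X) :
    (∑' i, opAdj (Λ i) (g i)) x = ∑' i, g i (Λ i x) :=
  (ContinuousLinearMap.apply ℝ ℝ x).map_tsum hg

theorem norm_sum_opAdj_le (hpq : p.HolderConjugate q) {B : ℝ} (hB : 0 ≤ B)
    (hΛ : ∀ x s, (∑ i ∈ s, ‖Λ i x‖ ^ p) ^ (1 / p) ≤ B * ‖x‖) (g : ∀ i, StrongDual ℝ (Y i))
    (s : Finset ι) : ‖∑ i ∈ s, opAdj (Λ i) (g i)‖ ≤ B * (∑ i ∈ s, ‖g i‖ ^ q) ^ (1 / q) := by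
  refine ContinuousLinearMap.opNorm_le_bound _ (by positivity) fun x => ?_
  calc ‖(∑ i ∈ s, opAdj (Λ i) (g i)) x‖ = ‖∑ i ∈ s, g i (Λ i x)‖ := by
        rw [sum_apply]; rfl
    _ ≤ ∑ i ∈ s, ‖g i‖ * ‖Λ i x‖ := norm_sum_le_of_le _ fun i _ => (g i).le_opNorm _
    _ ≤ (∑ i ∈ s, ‖g i‖ ^ q) ^ (1 / q) * (∑ i ∈ s, ‖Λ i x‖ ^ p) ^ (1 / p) :=
        Real.inner_le_Lp_mul_Lq_of_nonneg s hpq.symm (fun i _ => norm_nonneg _)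
          (fun i _ => norm_nonneg _)
    _ ≤ (∑ i ∈ s, ‖g i‖ ^ q) ^ (1 / q) * (B * ‖x‖) := by gcongr; exact hΛ x s
    _ = B * (∑ i ∈ s, ‖g i‖ ^ q) ^ (1 / q) * ‖x‖ := by ring

theorem sum_rpow_norm_apply_le_of_norm_tsum_opAdj_le (hpq : p.HolderConjugate q) {C : ℝ}
    (hC : 0 ≤ C) (hT : ∀ g : ∀ i, StrongDual ℝ (Y i), Summable (fun i => ‖g i‖ ^ q) →
      ‖∑' i, opAdj (Λ i) (g i)‖ ≤ C * (∑' i, ‖g i‖ ^ q) ^ (1 / q))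
    (x : X) (s : Finset ι) : (∑ i ∈ s, ‖Λ i x‖ ^ p) ^ (1 / p) ≤ C * ‖x‖ := by
  classical
  refine sum_rpow_rpow_le_of_forall_sum_mul_le hpq.symm (fun i => norm_nonneg _) (by positivity)
    fun c hc => ?_
  choose φ hφ hφx using fun i => exists_dual_vector'' ℝ (Λ i x)
  set g : ∀ i, StrongDual ℝ (Y i) := fun i => if i ∈ s then c i • φ i else 0
  have hg0 : ∀ i ∉ s, g i = 0 := fun i hi => if_neg hi
  have hgq0 : ∀ i ∉ s, ‖g i‖ ^ q = 0 := fun i hi => by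
    rw [hg0 i hi, norm_zero, Real.zero_rpow hpq.symm.ne_zero]
  have hgq : ∑' i, ‖g i‖ ^ q ≤ ∑ i ∈ s, c i ^ q := by
    rw [tsum_eq_sum hgq0]
    gcongr with i hi
    · exact hpq.symm.nonneg
    · simp only [g, if_pos hi, norm_smul, Real.norm_of_nonneg (hc i)]
      exact mul_le_of_le_one_right (hc i) (hφ i)
  calc ∑ i ∈ s, c i * ‖Λ i x‖ = (∑ i ∈ s, opAdj (Λ i) (g i)) x := by
        rw [sum_apply]
        refine Finset.sum_congr rfl fun i hi => ?_
        simp [g, opAdj, if_pos hi, hφx]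
    _ ≤ ‖∑' i, opAdj (Λ i) (g i)‖ * ‖x‖ := by
        rw [tsum_eq_sum fun i hi => by rw [hg0 i hi, map_zero]]
        exact (Real.le_norm_self _).trans (ContinuousLinearMap.le_opNorm _ x)
    _ ≤ C * (∑' i, ‖g i‖ ^ q) ^ (1 / q) * ‖x‖ := by
        gcongr; exact hT g (summable_of_ne_finset_zero hgq0)
    _ ≤ C * ‖x‖ * (∑ i ∈ s, c i ^ q) ^ (1 / q) := by
        rw [mul_right_comm]
        gcongr
        exact hpq.symm.one_div_nonneg

noncomputable def analysisOp (P : ℝ≥0∞) (Λ : ∀ i, X →L[ℝ] Y i)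
    (hΛ : ∀ x, Memℓp (fun i => Λ i x) P) : X →ₗ[ℝ] lp Y P where
  toFun x := ⟨fun i => Λ i x, hΛ x⟩
  map_add' a b := lp.ext <| funext fun i => map_add (Λ i) a b
  map_smul' c a := lp.ext <| funext fun i => map_smul (Λ i) c a

theorem exists_tsum_opAdj_eq_of_mul_norm_le {P : ℝ≥0∞} [Fact (1 ≤ P)]
    (hPq : P.toReal.HolderConjugate q) (hΛ : ∀ x, Summable fun i => ‖Λ i x‖ ^ P.toReal)
    {A : ℝ} (hA : 0 < A) (hAΛ : ∀ x, A * ‖x‖ ≤ (∑' i, ‖Λ i x‖ ^ P.toReal) ^ (1 / P.toReal))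
    (hsum : ∀ g : ∀ i, StrongDual ℝ (Y i), Summable (fun i => ‖g i‖ ^ q) →
      Summable fun i => opAdj (Λ i) (g i))
    (f : StrongDual ℝ X) : ∃ g : ∀ i, StrongDual ℝ (Y i),
      Summable (fun i => ‖g i‖ ^ q) ∧ ∑' i, opAdj (Λ i) (g i) = f := by
  classical
  set U := analysisOp P Λ fun x => memℓp_gen (hΛ x)
  obtain ⟨Φ, hΦ⟩ := exists_strongDual_apply_eq_of_mul_norm_le U hA
    (fun x => (lp.norm_eq_tsum_rpow hPq.pos (U x)).symm ▸ hAΛ x) f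
  set g := fun i => Φ.comp (lp.singleContinuousLinearMap ℝ Y P i)
  have hg : Summable fun i => ‖g i‖ ^ q :=
    ((summable_and_tsum_rpow_le_iff (fun i => by positivity) hPq.symm.pos (norm_nonneg Φ)).2
      (lp.sum_norm_comp_single_rpow_le hPq Φ)).1
  refine ⟨g, hg, ContinuousLinearMap.ext fun x => ?_⟩
  rw [tsum_opAdj_apply (hsum g hg), ← hΦ]
  exact (Φ.hasSum (lp.hasSum_single (ENNReal.toReal_pos_iff.1 hPq.pos).2.ne (U x))).tsum_eq

theorem lp.norm_tsum_apply_le {Q : ℝ≥0∞} (hpQ : p.HolderConjugate Q.toReal)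
    (g : lp (fun i => StrongDual ℝ (Y i)) Q) {y : ∀ i, Y i}
    (hy : Summable fun i => ‖y i‖ ^ p) :
    ‖∑' i, g i (y i)‖ ≤ ‖g‖ * (∑' i, ‖y i‖ ^ p) ^ (1 / p) := by
  obtain ⟨hsum, hle⟩ := Real.summable_and_inner_le_Lp_mul_Lq_tsum_of_nonneg hpQ.symm
    (fun i => norm_nonneg (g i)) (fun i => norm_nonneg (y i))
    ((lp.memℓp g).summable hpQ.symm.pos) hy
  rw [lp.norm_eq_tsum_rpow hpQ.symm.pos]
  exact (tsum_of_norm_bounded hsum.hasSum fun i => (g i).le_opNorm (y i)).trans hle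

theorem exists_pos_mul_norm_le_tsum_rpow_of_surjective {Q : ℝ≥0∞} [Fact (1 ≤ Q)]
    (hpQ : p.HolderConjugate Q.toReal) (hΛ : ∀ x, Summable fun i => ‖Λ i x‖ ^ p)
    (hsum : ∀ g : ∀ i, StrongDual ℝ (Y i), Summable (fun i => ‖g i‖ ^ Q.toReal) →
      Summable fun i => opAdj (Λ i) (g i))
    {C : ℝ} (hT : ∀ g : ∀ i, StrongDual ℝ (Y i), Summable (fun i => ‖g i‖ ^ Q.toReal) →
      ‖∑' i, opAdj (Λ i) (g i)‖ ≤ C * (∑' i, ‖g i‖ ^ Q.toReal) ^ (1 / Q.toReal))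
    (hsurj : ∀ f : StrongDual ℝ X, ∃ g : ∀ i, StrongDual ℝ (Y i),
      Summable (fun i => ‖g i‖ ^ Q.toReal) ∧ ∑' i, opAdj (Λ i) (g i) = f) :
    ∃ A > 0, ∀ x, A * ‖x‖ ≤ (∑' i, ‖Λ i x‖ ^ p) ^ (1 / p) := by
  have hmem (g : lp (fun i => StrongDual ℝ (Y i)) Q) : Summable fun i => ‖g i‖ ^ Q.toReal :=
    (lp.memℓp g).summable hpQ.symm.pos
  let T : lp (fun i => StrongDual ℝ (Y i)) Q →L[ℝ] StrongDual ℝ X :=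
    LinearMap.mkContinuous
      { toFun g := ∑' i, opAdj (Λ i) (g i)
        map_add' a b := by
          simp only [lp.coeFn_add, Pi.add_apply, map_add]
          exact (hsum _ (hmem a)).tsum_add (hsum _ (hmem b))
        map_smul' c a := by
          simp only [lp.coeFn_smul, Pi.smul_apply, map_smul, RingHom.id_apply]
          exact tsum_const_smul'' c }
      C fun g => (lp.norm_eq_tsum_rpow hpQ.symm.pos g).symm ▸ hT g (hmem g)
  have hTsurj : Function.Surjective T := fun f => by
    obtain ⟨g, hg, rfl⟩ := hsurj f
    exact ⟨⟨g, memℓp_gen hg⟩, rfl⟩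
  obtain ⟨c, hc, hnorming⟩ := T.exists_norm_le_apply_eq_norm_of_surjective hTsurj
  refine ⟨c⁻¹, inv_pos.2 hc, fun x => ?_⟩
  obtain ⟨g, hg, hgx⟩ := hnorming x
  rw [inv_mul_le_iff₀ hc]
  calc ‖x‖ = ∑' i, g i (Λ i x) := by
        rw [← tsum_opAdj_apply (hsum _ (hmem g))]; exact hgx.symm
    _ ≤ ‖g‖ * (∑' i, ‖Λ i x‖ ^ p) ^ (1 / p) :=
        (Real.le_norm_self _).trans (lp.norm_tsum_apply_le hpQ g (hΛ x))
    _ ≤ c * (∑' i, ‖Λ i x‖ ^ p) ^ (1 / p) := by gcongr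

end Frame

theorem pgFrame_iff_synthesis_bounded_surjective_general
    {X : Type*} [NormedAddCommGroup X] [NormedSpace ℝ X]
    {Y : ℕ → Type*} [∀ i, NormedAddCommGroup (Y i)] [∀ i, NormedSpace ℝ (Y i)]
    (p q : ℝ) (hp : 1 < p) (hpq : 1 / p + 1 / q = 1)
    (Λ : ∀ i, X →L[ℝ] Y i) :
    (∃ A B : ℝ, 0 < A ∧ 0 < B ∧ ∀ x : X, Summable (fun i => ‖Λ i x‖ ^ p) ∧
        A * ‖x‖ ≤ (∑' i, ‖Λ i x‖ ^ p) ^ (1 / p) ∧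
        (∑' i, ‖Λ i x‖ ^ p) ^ (1 / p) ≤ B * ‖x‖) ↔
      ((∀ g : ∀ i, StrongDual ℝ (Y i), Summable (fun i => ‖g i‖ ^ q) →
          Summable (fun i => opAdj (Λ i) (g i))) ∧
        (∃ C > (0 : ℝ), ∀ g : ∀ i, StrongDual ℝ (Y i), Summable (fun i => ‖g i‖ ^ q) →
          ‖∑' i, opAdj (Λ i) (g i)‖ ≤ C * (∑' i, ‖g i‖ ^ q) ^ (1 / q)) ∧
        (∀ f : StrongDual ℝ X, ∃ g : ∀ i, StrongDual ℝ (Y i),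
          Summable (fun i => ‖g i‖ ^ q) ∧ (∑' i, opAdj (Λ i) (g i)) = f)) := by
  have hconj : p.HolderConjugate q :=
    Real.holderConjugate_iff.2 ⟨hp, by simpa only [one_div] using hpq⟩
  have hexp (r : ℝ) (hr : 1 < r) : ∃ R : ℝ≥0∞, Fact (1 ≤ R) ∧ R.toReal = r :=
    ⟨ENNReal.ofReal r, ⟨by simpa using hr.le⟩, ENNReal.toReal_ofReal (by linarith)⟩
  -- the exponents become `P.toReal` and `Q.toReal`, as the `lp` API expects
  obtain ⟨P, _, rfl⟩ := hexp p hp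
  obtain ⟨Q, _, rfl⟩ := hexp q hconj.symm.lt
  have hbessel_iff (B : ℝ) (hB : 0 ≤ B) (x : X) :=
    summable_and_tsum_rpow_le_iff (fun i => by positivity : ∀ i, 0 ≤ ‖Λ i x‖ ^ P.toReal)
      hconj.pos (mul_nonneg hB (norm_nonneg x))
  constructor
  · rintro ⟨A, B, hA, hB, hΛ⟩
    have hbessel x s := (hbessel_iff B hB.le x).1 ⟨(hΛ x).1, (hΛ x).2.2⟩ s
    have hsyn (g : ∀ i, StrongDual ℝ (Y i)) (hg : Summable fun i => ‖g i‖ ^ Q.toReal) :=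
      summable_and_norm_tsum_le_of_norm_sum_le (fun i => by positivity) hg hB.le
        hconj.symm.one_div_pos (norm_sum_opAdj_le hconj hB.le hbessel g)
    exact ⟨fun g hg => (hsyn g hg).1, ⟨B, hB, fun g hg => (hsyn g hg).2⟩,
      exists_tsum_opAdj_eq_of_mul_norm_le hconj (fun x => (hΛ x).1) hA (fun x => (hΛ x).2.1)
        fun g hg => (hsyn g hg).1⟩
  · rintro ⟨hsum, ⟨C, hC, hT⟩, hsurj⟩
    have hbessel x := (hbessel_iff C hC.le x).2
      (sum_rpow_norm_apply_le_of_norm_tsum_opAdj_le hconj hC.le hT x)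
    obtain ⟨A, hA, hlower⟩ := exists_pos_mul_norm_le_tsum_rpow_of_surjective hconj
      (fun x => (hbessel x).1) hsum hT hsurj
    exact ⟨A, C, hA, hC, fun x => ⟨(hbessel x).1, hlower x, (hbessel x).2⟩⟩

/-- `Λ` is a pg-frame for `X` iff the synthesis operator
`T_Λ {gᵢ} = Σᵢ Λᵢ* gᵢ` is (well defined and) bounded and surjective onto `X*`. -/
theorem pgFrame_iff_synthesis_bounded_surjective
    {X : Type*} [NormedAddCommGroup X] [NormedSpace ℝ X] [CompleteSpace X]
    {Y : ℕ → Type*} [∀ i, NormedAddCommGroup (Y i)] [∀ i, NormedSpace ℝ (Y i)]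
    [∀ i, CompleteSpace (Y i)]
    (p q : ℝ) (hp : 1 < p) (hpq : 1 / p + 1 / q = 1)
    (Λ : ∀ i, X →L[ℝ] Y i) :
    (∃ A B : ℝ, 0 < A ∧ 0 < B ∧ ∀ x : X, Summable (fun i => ‖Λ i x‖ ^ p) ∧
        A * ‖x‖ ≤ (∑' i, ‖Λ i x‖ ^ p) ^ (1 / p) ∧
        (∑' i, ‖Λ i x‖ ^ p) ^ (1 / p) ≤ B * ‖x‖) ↔
      ((∀ g : ∀ i, StrongDual ℝ (Y i), Summable (fun i => ‖g i‖ ^ q) →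
          Summable (fun i => opAdj (Λ i) (g i))) ∧
        (∃ C > (0 : ℝ), ∀ g : ∀ i, StrongDual ℝ (Y i), Summable (fun i => ‖g i‖ ^ q) →
          ‖∑' i, opAdj (Λ i) (g i)‖ ≤ C * (∑' i, ‖g i‖ ^ q) ^ (1 / q)) ∧
        (∀ f : StrongDual ℝ X, ∃ g : ∀ i, StrongDual ℝ (Y i),
          Summable (fun i => ‖g i‖ ^ q) ∧ (∑' i, opAdj (Λ i) (g i)) = f)) :=
  pgFrame_iff_synthesis_bounded_surjective_general p q hp hpq Λ
end

section
/- Let {Y_i} be reflexive Banach spaces and Λ = {Λ_i ∈ B(X, Y_i)} a pg-frame for X. Then the following are equivalent: (i) Λ is a qg-Riesz basis for X^*; (ii) whenever {g_i} ∈ (Σ_i ⊕ Y_i^*)_{ℓ^q} and Σ_i Λ_i^* g_i = 0, then g_i = 0 for all i; (iii) the range of the analysis operator U_Λ is all of (Σ_i ⊕ Y_i)_{ℓ^p}. -/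
/-!
The analysis operator `U x = (Λᵢ x)ᵢ` into `ℓᵖ(Yᵢ)` is bounded below by `A`, hence injective
with closed range, and by Hahn–Banach every `f ∈ X*` is `U* φ` for some `φ` with
`A ‖φ‖ ≤ ‖f‖`. Since `ℓᵖ(Yᵢ)* ≅ ℓ^q(Yᵢ*)` isometrically, the synthesis map
`(gᵢ) ↦ ∑ Λᵢ* gᵢ` is `U*` composed with this isometry. So (ii) says that `U*` is injective; as
`range U` is closed, this is the surjectivity of `U` (iii), and it turns the Hahn–Banach
preimages into the lower Riesz bound `A` (the upper one is `‖U‖ ≤ B`). Conversely, a lower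
Riesz bound on finite sums passes to the limit on all of `ℓ^q` and forces `U*` to be injective.
-/

open NormedSpace Filter

open Topology
open scoped ENNReal

theorem ContinuousLinearMap.exists_norm_le_one_mul_norm_le_apply {F : Type*}
    [NormedAddCommGroup F] [NormedSpace ℝ F] (f : StrongDual ℝ F) {t : ℝ} (ht : t < 1) :
    ∃ y : F, ‖y‖ ≤ 1 ∧ t * ‖f‖ ≤ f y := by
  rcases (norm_nonneg f).eq_or_lt with h | h
  · exact ⟨0, by simp, by simp [← h]⟩
  obtain ⟨y, hy, hty⟩ := f.exists_lt_apply_of_lt_opNorm (mul_lt_of_lt_one_left h ht)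
  rcases le_or_gt 0 (f y) with h0 | h0
  · exact ⟨y, hy.le, by rw [Real.norm_of_nonneg h0] at hty; exact hty.le⟩
  · rw [Real.norm_of_nonpos h0.le] at hty
    exact ⟨-y, by simpa using hy.le, by simpa using hty.le⟩

namespace lp

variable {ι : Type*} [DecidableEq ι] {E : ι → Type*} [∀ i, NormedAddCommGroup (E i)]
  {p q : ℝ≥0∞} [Fact (1 ≤ p)]

theorem norm_sum_single_eq_rpow (hp : 0 < p.toReal) (s : Finset ι) (f : ∀ i, E i) :
    ‖∑ i ∈ s, lp.single p i (f i)‖ = (∑ i ∈ s, ‖f i‖ ^ p.toReal) ^ (1 / p.toReal) := by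
  rw [← lp.norm_sum_single hp, ← Real.rpow_mul (norm_nonneg _), mul_one_div_cancel hp.ne',
    Real.rpow_one]

variable [∀ i, NormedSpace ℝ (E i)]

theorem sum_norm_comp_single_rpow_le_s9 (hpq : p.toReal.HolderConjugate q.toReal)
    (φ : StrongDual ℝ (lp E p)) (s : Finset ι) :
    ∑ i ∈ s, ‖φ.comp (singleContinuousLinearMap ℝ E p i)‖ ^ q.toReal ≤ ‖φ‖ ^ q.toReal := by
  set g := fun i => φ.comp (singleContinuousLinearMap ℝ E p i)
  set S := ∑ i ∈ s, ‖g i‖ ^ q.toReal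
  have hS0 : 0 ≤ S := by positivity
  -- test `φ` against `∑ ‖gᵢ‖ ^ (q - 1) • yᵢ` with `gᵢ yᵢ ≈ ‖gᵢ‖`: the equality case of Hölder
  have key : ∀ t < 1, t * S ≤ ‖φ‖ * S ^ (1 / p.toReal) := by
    intro t ht
    choose y hy1 hy using fun i => (g i).exists_norm_le_one_mul_norm_le_apply ht
    set c := fun i => ‖g i‖ ^ (q.toReal - 1)
    have hc : ∀ i, c i * ‖g i‖ = ‖g i‖ ^ q.toReal := fun i => by
      rw [← Real.rpow_add_one' (norm_nonneg _) (by linarith [hpq.symm.lt]), sub_add_cancel]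
    have hcp : ∀ i, c i ^ p.toReal = ‖g i‖ ^ q.toReal := fun i => by
      rw [← Real.rpow_mul (norm_nonneg _), hpq.symm.sub_one_mul_conj]
    set v := ∑ i ∈ s, lp.single p i (c i • y i)
    have hv : ‖v‖ ≤ S ^ (1 / p.toReal) := by
      rw [norm_sum_single_eq_rpow hpq.pos]
      gcongr
      refine Finset.sum_le_sum fun i _ => ?_
      rw [← hcp i, norm_smul, Real.norm_of_nonneg (by positivity)]
      gcongr
      exact mul_le_of_le_one_right (by positivity) (hy1 i)
    calc t * S = ∑ i ∈ s, c i * (t * ‖g i‖) := by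
          simp only [S, Finset.mul_sum, ← hc]; congr 1; ext i; ring
      _ ≤ ∑ i ∈ s, c i * g i (y i) := by gcongr with i; exact hy i
      _ = φ v := by simp [v, g, map_sum, lp.single_smul]
      _ ≤ ‖φ‖ * ‖v‖ := (le_abs_self _).trans (φ.le_opNorm v)
      _ ≤ ‖φ‖ * S ^ (1 / p.toReal) := by gcongr
  have hS : S ≤ ‖φ‖ * S ^ (1 / p.toReal) := by
    have : Tendsto (fun t : ℝ => t * S) (𝓝[<] 1) (𝓝 S) :=
      ((continuous_id.mul continuous_const).tendsto' 1 S (one_mul S)).mono_left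
        nhdsWithin_le_nhds
    exact le_of_tendsto this (eventually_nhdsWithin_of_forall key)
  rcases hS0.eq_or_lt with h0 | hpos
  · rw [← h0]; positivity
  have hsplit : S = S ^ (1 / p.toReal) * S ^ (1 / q.toReal) := by
    rw [← Real.rpow_add hpos, hpq.one_div_add_one_div, one_div_one, Real.rpow_one]
  have hroot : S ^ (1 / q.toReal) ≤ ‖φ‖ := by
    refine le_of_mul_le_mul_left ?_ (Real.rpow_pos_of_pos hpos (1 / p.toReal))
    rw [← hsplit, mul_comm]; exact hS
  calc S = (S ^ (1 / q.toReal)) ^ q.toReal := by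
        rw [← Real.rpow_mul hS0, one_div_mul_cancel hpq.symm.ne_zero, Real.rpow_one]
    _ ≤ ‖φ‖ ^ q.toReal := by gcongr

variable (hpq : p.toReal.HolderConjugate q.toReal)
include hpq

noncomputable def dualCoeffs (φ : StrongDual ℝ (lp E p)) :
    lp (fun i => StrongDual ℝ (E i)) q :=
  ⟨fun i => φ.comp (singleContinuousLinearMap ℝ E p i),
    memℓp_gen' (sum_norm_comp_single_rpow_le_s9 hpq φ)⟩

theorem norm_dualCoeffs_le (φ : StrongDual ℝ (lp E p)) : ‖dualCoeffs hpq φ‖ ≤ ‖φ‖ :=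
  norm_le_of_forall_sum_le hpq.symm.pos (norm_nonneg φ) (sum_norm_comp_single_rpow_le_s9 hpq φ)

variable [Fact (1 ≤ q)]

noncomputable def dualEquiv :
    lp (fun i => StrongDual ℝ (E i)) q ≃ₗᵢ[ℝ] StrongDual ℝ (lp E p) :=
  haveI := ENNReal.HolderConjugate.of_toReal hpq.symm
  let J := dualPairing q p (fun i => ContinuousLinearMap.id ℝ (StrongDual ℝ (E i))) (K := 1)
    (fun _ => by simpa using ContinuousLinearMap.norm_id_le)
  have hJ : ∀ G, ‖J G‖ ≤ ‖G‖ := fun G => by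
    simpa using J.le_of_opNorm_le (norm_dualPairing ..) G
  have hRJ : ∀ G, dualCoeffs hpq (J G) = G := fun G => by
    ext i a
    show ∑' j, G j (lp.single p i a j) = G i a
    rw [tsum_eq_single i fun j hj => by simp [hj]]
    simp
  { J.toLinearMap with
    invFun := dualCoeffs hpq
    left_inv := hRJ
    right_inv := fun φ => by
      ext v
      exact ((lp.hasSum_single (ENNReal.toReal_pos_iff.1 hpq.pos).2.ne v).mapL φ).tsum_eq
    norm_map' := fun G => show ‖J G‖ = ‖G‖ from le_antisymm (hJ G) <| by
      simpa only [hRJ] using norm_dualCoeffs_le hpq (J G) }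

theorem dualEquiv_apply (G : lp (fun i => StrongDual ℝ (E i)) q) (v : lp E p) :
    dualEquiv hpq G v = ∑' i, G i (v i) := rfl

theorem dualEquiv_single_apply (i : ι) (a : StrongDual ℝ (E i)) (v : lp E p) :
    dualEquiv hpq (lp.single q i a) v = a (v i) := by
  rw [dualEquiv_apply, tsum_eq_single i fun j hj => by simp [hj]]
  simp

end lp

section BoundedBelow

variable {E F : Type*} [NormedAddCommGroup E] [NormedSpace ℝ E] [NormedAddCommGroup F]
  [NormedSpace ℝ F] {T : E →L[ℝ] F} {A : ℝ}

theorem opAdj_apply_s9 (T : E →L[ℝ] F) (φ : StrongDual ℝ F) : opAdj T φ = φ.comp T := rfl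

theorem norm_opAdj_le (T : E →L[ℝ] F) : ‖opAdj T‖ ≤ ‖T‖ :=
  ContinuousLinearMap.opNorm_le_bound _ (norm_nonneg T) fun φ => by
    rw [opAdj_apply_s9, mul_comm]; exact φ.opNorm_comp_le T

theorem antilipschitz_of_mul_norm_le (hA : 0 < A) (hT : ∀ x, A * ‖x‖ ≤ ‖T x‖) :
    AntilipschitzWith (Real.toNNReal A⁻¹) T :=
  T.antilipschitz_of_bound fun x => by
    rw [Real.coe_toNNReal _ (inv_nonneg.2 hA.le), ← div_eq_inv_mul, le_div_iff₀' hA]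
    exact hT x

theorem exists_opAdj_eq_of_mul_norm_le (hA : 0 < A) (hT : ∀ x, A * ‖x‖ ≤ ‖T x‖)
    (f : StrongDual ℝ E) : ∃ φ : StrongDual ℝ F, opAdj T φ = f ∧ A * ‖φ‖ ≤ ‖f‖ := by
  let e :=
    LinearEquiv.ofInjective (T : E →ₗ[ℝ] F) (antilipschitz_of_mul_norm_le hA hT).injective
  have he : ∀ m, A * ‖e.symm m‖ ≤ ‖m‖ := fun m =>
    (hT (e.symm m)).trans_eq (congrArg (‖·‖) (congrArg Subtype.val (e.apply_symm_apply m)))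
  let φ₀ : StrongDual ℝ (LinearMap.range (T : E →ₗ[ℝ] F)) :=
    (f.toLinearMap.comp e.symm.toLinearMap).mkContinuous (‖f‖ / A) fun m => by
      calc ‖f (e.symm m)‖ ≤ ‖f‖ * ‖e.symm m‖ := f.le_opNorm _
        _ ≤ ‖f‖ / A * ‖m‖ := by
          rw [div_mul_eq_mul_div, le_div_iff₀ hA, mul_assoc, mul_comm _ A]
          gcongr; exact he m
  obtain ⟨φ, hφ, hnorm⟩ := exists_extension_norm_eq _ φ₀
  refine ⟨φ, ContinuousLinearMap.ext fun x => ?_, ?_⟩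
  · exact (hφ (e x)).trans (by simp [φ₀])
  · rw [hnorm, ← le_div_iff₀' hA]
    exact LinearMap.mkContinuous_norm_le _ (by positivity) _

theorem mul_norm_le_norm_opAdj (hA : 0 < A) (hT : ∀ x, A * ‖x‖ ≤ ‖T x‖)
    (hinj : Function.Injective (opAdj T)) (φ : StrongDual ℝ F) : A * ‖φ‖ ≤ ‖opAdj T φ‖ := by
  obtain ⟨ψ, hψ, hle⟩ := exists_opAdj_eq_of_mul_norm_le hA hT (opAdj T φ)
  rwa [hinj hψ] at hle

theorem opAdj_injective_iff_surjective [CompleteSpace E] (hA : 0 < A)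
    (hT : ∀ x, A * ‖x‖ ≤ ‖T x‖) : Function.Injective (opAdj T) ↔ Function.Surjective T := by
  refine ⟨fun hinj v => ?_, fun hsurj => (injective_iff_map_eq_zero _).2 fun φ hφ => ?_⟩
  · let M := LinearMap.range (T : E →ₗ[ℝ] F)
    have hM : IsClosed (M : Set F) := by
      simpa only [M, LinearMap.coe_range, ContinuousLinearMap.coe_coe] using
        (antilipschitz_of_mul_norm_le hA hT).isClosed_range T.uniformContinuous
    by_contra! hv
    obtain ⟨ψ, hψ⟩ := SeparatingDual.exists_ne_zero (R := ℝ) (x := M.mkQ v) <| by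
      simpa [Submodule.Quotient.mk_eq_zero, M] using hv
    have : ψ.comp M.mkQL = 0 := hinj <| by
      ext x
      have : M.mkQ (T x) = 0 := (Submodule.Quotient.mk_eq_zero M).2 ⟨x, rfl⟩
      simp [opAdj_apply_s9, this]
    exact hψ (by simpa using congr($this v))
  · ext v
    obtain ⟨x, rfl⟩ := hsurj v
    exact congr($hφ x)

end BoundedBelow

section Frame

variable {X : Type*} [NormedAddCommGroup X] [NormedSpace ℝ X] {ι : Type*}
  {Y : ι → Type*} [∀ i, NormedAddCommGroup (Y i)] [∀ i, NormedSpace ℝ (Y i)]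
  {p q : ℝ≥0∞} [Fact (1 ≤ p)] {Λ : ∀ i, X →L[ℝ] Y i}

theorem exists_analysisOp (hp : 0 < p.toReal) {B : ℝ}
    (hsum : ∀ x, Summable fun i => ‖Λ i x‖ ^ p.toReal)
    (hB : ∀ x, (∑' i, ‖Λ i x‖ ^ p.toReal) ^ (1 / p.toReal) ≤ B * ‖x‖) :
    ∃ U : X →L[ℝ] lp Y p, (∀ x i, U x i = Λ i x) ∧
      ∀ x, ‖U x‖ = (∑' i, ‖Λ i x‖ ^ p.toReal) ^ (1 / p.toReal) := by
  let U₀ : X →ₗ[ℝ] lp Y p :=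
    { toFun := fun x => ⟨fun i => Λ i x, memℓp_gen (hsum x)⟩
      map_add' := fun x y => by ext i; exact map_add (Λ i) x y
      map_smul' := fun c x => by ext i; simp }
  have hU₀ : ∀ x, ‖U₀ x‖ = (∑' i, ‖Λ i x‖ ^ p.toReal) ^ (1 / p.toReal) :=
    fun x => lp.norm_eq_tsum_rpow hp _
  exact ⟨U₀.mkContinuous B fun x => (hU₀ x).trans_le (hB x), fun x i => rfl, hU₀⟩

variable [DecidableEq ι] [Fact (1 ≤ q)] (hpq : p.toReal.HolderConjugate q.toReal)
  {U : X →L[ℝ] lp Y p} (hU : ∀ x i, U x i = Λ i x)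
include hpq hU

theorem opAdj_dualEquiv_single (i : ι) (a : StrongDual ℝ (Y i)) :
    opAdj U (lp.dualEquiv hpq (lp.single q i a)) = opAdj (Λ i) a := by
  ext x
  simp [opAdj_apply_s9, lp.dualEquiv_single_apply, hU]

theorem hasSum_opAdj_dualEquiv (G : lp (fun i => StrongDual ℝ (Y i)) q) :
    HasSum (fun i => opAdj (Λ i) (G i)) (opAdj U (lp.dualEquiv hpq G)) := by
  have hq : q ≠ ∞ := (ENNReal.toReal_pos_iff.1 hpq.symm.pos).2.ne
  simpa [opAdj_dualEquiv_single hpq hU] using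
    ((lp.hasSum_single hq G).map (lp.dualEquiv hpq) (lp.dualEquiv hpq).continuous).mapL
      (opAdj U)

theorem sum_opAdj_eq (s : Finset ι) (g : ∀ i, StrongDual ℝ (Y i)) :
    ∑ i ∈ s, opAdj (Λ i) (g i) =
      opAdj U (lp.dualEquiv hpq (∑ i ∈ s, lp.single q i (g i))) := by
  simp [map_sum, opAdj_dualEquiv_single hpq hU]

theorem synthesis_injective_iff_opAdj_injective :
    (∀ g : ∀ i, StrongDual ℝ (Y i), Summable (fun i => ‖g i‖ ^ q.toReal) →
        (∑' i, opAdj (Λ i) (g i)) = 0 → ∀ i, g i = 0) ↔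
      Function.Injective (opAdj U) := by
  set D := lp.dualEquiv (E := Y) hpq
  refine ⟨fun h => (injective_iff_map_eq_zero _).2 fun φ hφ => ?_, fun hinj g hg h0 => ?_⟩
  · have hG := h (D.symm φ) ((lp.memℓp _).summable hpq.symm.pos) <| by
      rw [(hasSum_opAdj_dualEquiv hpq hU _).tsum_eq, D.apply_symm_apply, hφ]
    simpa using (lp.ext (funext hG) : D.symm φ = 0)
  · let G : lp (fun i => StrongDual ℝ (Y i)) q := ⟨g, memℓp_gen hg⟩
    have hG : D G = 0 := hinj <| by
      rw [← (hasSum_opAdj_dualEquiv hpq hU G).tsum_eq, map_zero]; exact h0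
    exact fun i => congr($(D.map_eq_zero_iff.1 hG) i)

theorem riesz_bounds_of_opAdj_injective {A B : ℝ} (hA : 0 < A)
    (hlow : ∀ x, A * ‖x‖ ≤ ‖U x‖) (hB : ‖U‖ ≤ B) (hinj : Function.Injective (opAdj U))
    (s : Finset ι) (g : ∀ i, StrongDual ℝ (Y i)) :
    A * (∑ i ∈ s, ‖g i‖ ^ q.toReal) ^ (1 / q.toReal) ≤ ‖∑ i ∈ s, opAdj (Λ i) (g i)‖ ∧
      ‖∑ i ∈ s, opAdj (Λ i) (g i)‖ ≤ B * (∑ i ∈ s, ‖g i‖ ^ q.toReal) ^ (1 / q.toReal) := by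
  rw [sum_opAdj_eq hpq hU, ← lp.norm_sum_single_eq_rpow hpq.symm.pos]
  set D := lp.dualEquiv (E := Y) hpq
  set G := ∑ i ∈ s, lp.single q i (g i)
  constructor
  · calc A * ‖G‖ = A * ‖D G‖ := by rw [D.norm_map]
      _ ≤ ‖opAdj U (D G)‖ := mul_norm_le_norm_opAdj hA hlow hinj _
  · calc ‖opAdj U (D G)‖ ≤ ‖opAdj U‖ * ‖D G‖ := (opAdj U).le_opNorm _
      _ ≤ B * ‖G‖ := by rw [D.norm_map]; gcongr; exact (norm_opAdj_le U).trans hB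

theorem opAdj_injective_of_riesz_lower {A : ℝ} (hA : 0 < A)
    (h : ∀ (s : Finset ι) (g : ∀ i, StrongDual ℝ (Y i)),
      A * (∑ i ∈ s, ‖g i‖ ^ q.toReal) ^ (1 / q.toReal) ≤ ‖∑ i ∈ s, opAdj (Λ i) (g i)‖) :
    Function.Injective (opAdj U) := by
  refine (injective_iff_map_eq_zero _).2 fun φ hφ => ?_
  set G := (lp.dualEquiv hpq).symm φ
  have hq := hpq.symm.pos
  have hsums : Tendsto (fun s => A * (∑ i ∈ s, ‖G i‖ ^ q.toReal) ^ (1 / q.toReal)) atTop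
      (𝓝 (A * ‖G‖)) := by
    rw [lp.norm_eq_tsum_rpow hq]
    exact (((lp.memℓp G).summable hq).hasSum.rpow_const (Or.inr (by positivity))).const_mul A
  have hG : A * ‖G‖ ≤ 0 := by
    simpa [G, hφ] using le_of_tendsto_of_tendsto' hsums
      (hasSum_opAdj_dualEquiv hpq hU G).norm fun s => h s G
  simpa [G] using nonpos_of_mul_nonpos_right hG hA

end Frame

theorem pgFrame_tfae_qgRiesz_general
    {X : Type*} [NormedAddCommGroup X] [NormedSpace ℝ X] [CompleteSpace X]
    {Y : ℕ → Type*} [∀ i, NormedAddCommGroup (Y i)] [∀ i, NormedSpace ℝ (Y i)]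
    (p q : ℝ) (hp : 1 < p) (hpq : 1 / p + 1 / q = 1)
    [Fact (1 ≤ ENNReal.ofReal p)]
    (Λ : ∀ i, X →L[ℝ] Y i) (A B : ℝ) (hA : 0 < A) (hB : 0 < B)
    (hframe : ∀ x : X, Summable (fun i => ‖Λ i x‖ ^ p) ∧
      A * ‖x‖ ≤ (∑' i, ‖Λ i x‖ ^ p) ^ (1 / p) ∧
      (∑' i, ‖Λ i x‖ ^ p) ^ (1 / p) ≤ B * ‖x‖) :
    -- (i) ↔ (ii) and (ii) ↔ (iii)
    (((∀ x : X, (∀ i, Λ i x = 0) → x = 0) ∧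
        ∃ A' B' : ℝ, 0 < A' ∧ 0 < B' ∧
          ∀ (s : Finset ℕ) (g : ∀ i, StrongDual ℝ (Y i)),
            A' * (∑ i ∈ s, ‖g i‖ ^ q) ^ (1 / q) ≤ ‖∑ i ∈ s, opAdj (Λ i) (g i)‖ ∧
            ‖∑ i ∈ s, opAdj (Λ i) (g i)‖ ≤ B' * (∑ i ∈ s, ‖g i‖ ^ q) ^ (1 / q)) ↔
      (∀ g : ∀ i, StrongDual ℝ (Y i), Summable (fun i => ‖g i‖ ^ q) →
        (∑' i, opAdj (Λ i) (g i)) = 0 → ∀ i, g i = 0)) ∧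
    ((∀ g : ∀ i, StrongDual ℝ (Y i), Summable (fun i => ‖g i‖ ^ q) →
        (∑' i, opAdj (Λ i) (g i)) = 0 → ∀ i, g i = 0) ↔
      (∀ v : lp Y (ENNReal.ofReal p), ∃ x : X, ∀ i, Λ i x = (v : ∀ i, Y i) i)) := by
  have hpq' : p.HolderConjugate q :=
    Real.holderConjugate_iff.2 ⟨hp, by simpa only [one_div] using hpq⟩
  have hp' : (ENNReal.ofReal p).toReal = p := ENNReal.toReal_ofReal hpq'.nonneg
  have hq' : (ENNReal.ofReal q).toReal = q := ENNReal.toReal_ofReal hpq'.symm.nonneg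
  have : Fact (1 ≤ ENNReal.ofReal q) := ⟨ENNReal.one_le_ofReal.2 hpq'.symm.lt.le⟩
  have hPQ : (ENNReal.ofReal p).toReal.HolderConjugate (ENNReal.ofReal q).toReal := by
    rwa [hp', hq']
  obtain ⟨U, hU, hUnorm⟩ := exists_analysisOp (p := ENNReal.ofReal p) (Λ := Λ)
    (by rw [hp']; exact hpq'.pos) (fun x => by simpa only [hp'] using (hframe x).1)
    (fun x => by simpa only [hp'] using (hframe x).2.2)
  simp only [hp'] at hUnorm
  have hlow : ∀ x, A * ‖x‖ ≤ ‖U x‖ := fun x => hUnorm x ▸ (hframe x).2.1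
  have hUB : ‖U‖ ≤ B := U.opNorm_le_bound hB.le fun x => hUnorm x ▸ (hframe x).2.2
  have hii := synthesis_injective_iff_opAdj_injective hPQ hU
  simp only [hq'] at hii
  have hiii :
      Function.Surjective U ↔ ∀ v : lp Y (ENNReal.ofReal p), ∃ x, ∀ i, Λ i x = v i := by
    simp only [Function.Surjective, lp.ext_iff, funext_iff, hU]
  rw [hii]
  refine ⟨⟨fun ⟨_, A', _, hA', _, hR⟩ => ?_, fun hinj => ⟨fun x hx => ?_, A, B, hA, hB, ?_⟩⟩,
    (opAdj_injective_iff_surjective hA hlow).trans hiii⟩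
  · exact opAdj_injective_of_riesz_lower hPQ hU hA'
      (by simpa only [hq'] using fun s g => (hR s g).1)
  · exact (antilipschitz_of_mul_norm_le hA hlow).injective (by ext i; simp [hU, hx])
  · simpa only [hq'] using riesz_bounds_of_opAdj_injective hPQ hU hA hlow hUB hinj

/-- for a pg-frame `Λ` for `X` with reflexive `Yᵢ`, the following are
equivalent: (i) `Λ` is a qg-Riesz basis for `X*`; (ii) the synthesis operator is
injective (`Σᵢ Λᵢ* gᵢ = 0` with `{gᵢ} ∈ ℓᑫ` forces `gᵢ = 0`); (iii) the range of the
analysis operator `U_Λ` is all of `(Σᵢ ⊕ Yᵢ)_{ℓᵖ}`. -/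
theorem pgFrame_tfae_qgRiesz
    {X : Type*} [NormedAddCommGroup X] [NormedSpace ℝ X] [CompleteSpace X]
    {Y : ℕ → Type*} [∀ i, NormedAddCommGroup (Y i)] [∀ i, NormedSpace ℝ (Y i)]
    [∀ i, CompleteSpace (Y i)]
    (p q : ℝ) (hp : 1 < p) (hpq : 1 / p + 1 / q = 1)
    [Fact (1 ≤ ENNReal.ofReal p)]
    (Λ : ∀ i, X →L[ℝ] Y i) (A B : ℝ) (hA : 0 < A) (hB : 0 < B)
    (hframe : ∀ x : X, Summable (fun i => ‖Λ i x‖ ^ p) ∧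
      A * ‖x‖ ≤ (∑' i, ‖Λ i x‖ ^ p) ^ (1 / p) ∧
      (∑' i, ‖Λ i x‖ ^ p) ^ (1 / p) ≤ B * ‖x‖)
    (hrefl : ∀ i, Function.Surjective (inclusionInDoubleDual ℝ (Y i))) :
    -- (i) ↔ (ii) and (ii) ↔ (iii)
    (((∀ x : X, (∀ i, Λ i x = 0) → x = 0) ∧
        ∃ A' B' : ℝ, 0 < A' ∧ 0 < B' ∧
          ∀ (s : Finset ℕ) (g : ∀ i, StrongDual ℝ (Y i)),
            A' * (∑ i ∈ s, ‖g i‖ ^ q) ^ (1 / q) ≤ ‖∑ i ∈ s, opAdj (Λ i) (g i)‖ ∧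
            ‖∑ i ∈ s, opAdj (Λ i) (g i)‖ ≤ B' * (∑ i ∈ s, ‖g i‖ ^ q) ^ (1 / q)) ↔
      (∀ g : ∀ i, StrongDual ℝ (Y i), Summable (fun i => ‖g i‖ ^ q) →
        (∑' i, opAdj (Λ i) (g i)) = 0 → ∀ i, g i = 0)) ∧
    ((∀ g : ∀ i, StrongDual ℝ (Y i), Summable (fun i => ‖g i‖ ^ q) →
        (∑' i, opAdj (Λ i) (g i)) = 0 → ∀ i, g i = 0) ↔
      (∀ v : lp Y (ENNReal.ofReal p), ∃ x : X, ∀ i, Λ i x = (v : ∀ i, Y i) i)) :=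
  pgFrame_tfae_qgRiesz_general p q hp hpq Λ A B hA hB hframe
end

section
/- Let Λ = {Λ_i ∈ B(X₂, Y_i)} be a qg-Riesz basis for X₂^* and Θ = {Θ_i ∈ B(X₁^*, Y_i^*)} a qg-Bessel sequence for X₁^* with Θ_i ≠ 0 for all i. Then the map m ↦ M_{m,Λ,Θ} from ℓ^∞ into B(X₁^*, X₂^*) is injective. -/
/-!
The upper Riesz bound and the `q`-summability of `(‖Θᵢ g‖)ᵢ` make every series
`∑ᵢ mᵢ Λᵢ^* Θᵢ g` with bounded `m` converge (Cauchy criterion). If two symbols give the same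
multiplier, the series with coefficients `(mᵢ - m'ᵢ) Θᵢ g` sums to `0`, and the lower Riesz bound
then forces every coefficient to vanish. Choosing `g` with `Θᵢ g ≠ 0` gives `mᵢ = m'ᵢ`.
-/

open NormedSpace Filter

open Topology

theorem summable_of_norm_sum_le_mul_rpow {ι F : Type*} [SeminormedAddCommGroup F] [CompleteSpace F]
    {u : ι → F} {v : ι → ℝ} {B r : ℝ} (hr : 0 < r) (hv : Summable v)
    (hbound : ∀ s : Finset ι, ‖∑ i ∈ s, u i‖ ≤ B * (∑ i ∈ s, v i) ^ r) :
    Summable u := by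
  have hlim : Tendsto (fun x : ℝ => B * x ^ r) (𝓝 0) (𝓝 0) := by
    simpa [Real.zero_rpow hr.ne'] using
      ((Real.continuousAt_rpow_const 0 r (Or.inr hr.le)).const_mul B).tendsto
  rw [summable_iff_vanishing_norm]
  intro ε hε
  obtain ⟨δ, hδ, hsmall⟩ := Metric.tendsto_nhds_nhds.mp hlim ε hε
  obtain ⟨s, hs⟩ := summable_iff_vanishing_norm.mp hv δ hδ
  refine ⟨s, fun t ht => (hbound t).trans_lt ?_⟩
  have hsum_small := hsmall (x := ∑ i ∈ t, v i) (by simpa using hs t ht)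
  rw [Real.dist_eq, sub_zero] at hsum_small
  exact (le_abs_self _).trans_lt hsum_small

theorem summable_norm_smul_rpow {ι 𝕜 : Type*} {E : ι → Type*} [NormedField 𝕜]
    [∀ i, SeminormedAddCommGroup (E i)] [∀ i, NormedSpace 𝕜 (E i)] {c : ι → 𝕜} {x : ∀ i, E i}
    {q : ℝ} (hq : 0 ≤ q)
    (hc : ∃ C, ∀ i, ‖c i‖ ≤ C) (hx : Summable fun i => ‖x i‖ ^ q) :
    Summable fun i => ‖c i • x i‖ ^ q := by
  obtain ⟨C, hC⟩ := hc
  refine (hx.mul_left (C ^ q)).of_nonneg_of_le (fun i => by positivity) fun i => ?_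
  rw [norm_smul, Real.mul_rpow (norm_nonneg _) (norm_nonneg _)]
  gcongr
  exact hC i

theorem le_sum_rpow_rpow_one_div {ι : Type*} {a : ι → ℝ} {s : Finset ι} {q : ℝ} (hq : 0 < q)
    (ha : ∀ i ∈ s, 0 ≤ a i) {j : ι} (hj : j ∈ s) :
    a j ≤ (∑ i ∈ s, a i ^ q) ^ (1 / q) := by
  rw [one_div, Real.le_rpow_inv_iff_of_pos (ha j hj)
    (Finset.sum_nonneg fun i hi => Real.rpow_nonneg (ha i hi) q) hq]
  exact Finset.single_le_sum (f := fun i => a i ^ q) (fun i hi => Real.rpow_nonneg (ha i hi) q) hj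

theorem eq_zero_of_hasSum_zero_of_le_norm_sum {ι F : Type*} [SeminormedAddCommGroup F]
    {u : ι → F} {a : ι → ℝ} {A q : ℝ} (hA : 0 < A) (hq : 0 < q) (ha : ∀ i, 0 ≤ a i)
    (hu : HasSum u 0)
    (hlower : ∀ s : Finset ι, A * (∑ i ∈ s, a i ^ q) ^ (1 / q) ≤ ‖∑ i ∈ s, u i‖) (j : ι) :
    a j = 0 := by
  have hle : A * a j ≤ 0 := by
    refine ge_of_tendsto (by simpa using hu.norm) ?_
    filter_upwards [eventually_ge_atTop {j}] with s hs
    exact (mul_le_mul_of_nonneg_left (le_sum_rpow_rpow_one_div hq (fun i _ => ha i)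
      (Finset.singleton_subset_iff.mp hs)) hA.le).trans (hlower s)
  exact le_antisymm (nonpos_of_mul_nonpos_right hle hA) (ha j)

theorem multiplier_symbol_injective_general
    {X₁ X₂ : Type*} [NormedAddCommGroup X₁] [NormedSpace ℝ X₁]
    [NormedAddCommGroup X₂] [NormedSpace ℝ X₂]
    {Y : ℕ → Type*} [∀ i, NormedAddCommGroup (Y i)] [∀ i, NormedSpace ℝ (Y i)]
    (p q : ℝ) (hp : 1 < p) (hpq : 1 / p + 1 / q = 1)
    (Λ : ∀ i, X₂ →L[ℝ] Y i) (Θ : ∀ i, StrongDual ℝ X₁ →L[ℝ] StrongDual ℝ (Y i))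
    -- `Λ` is a qg-Riesz basis for `X₂*`
    (hriesz : ∃ A B : ℝ, 0 < A ∧ 0 < B ∧
      ∀ (s : Finset ℕ) (g : ∀ i, StrongDual ℝ (Y i)),
        A * (∑ i ∈ s, ‖g i‖ ^ q) ^ (1 / q) ≤ ‖∑ i ∈ s, opAdj (Λ i) (g i)‖ ∧
        ‖∑ i ∈ s, opAdj (Λ i) (g i)‖ ≤ B * (∑ i ∈ s, ‖g i‖ ^ q) ^ (1 / q))
    -- `Θ` is a qg-Bessel sequence for `X₁*` with nonzero members
    (BΘ : ℝ)
    (hΘ : ∀ g : StrongDual ℝ X₁, Summable (fun i => ‖Θ i g‖ ^ q) ∧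
      (∑' i, ‖Θ i g‖ ^ q) ^ (1 / q) ≤ BΘ * ‖g‖)
    (hΘne : ∀ i, Θ i ≠ 0) :
    ∀ m m' : ℕ → ℝ, (∃ M, ∀ i, |m i| ≤ M) → (∃ M', ∀ i, |m' i| ≤ M') →
      (∀ g : StrongDual ℝ X₁,
        (∑' i, m i • opAdj (Λ i) (Θ i g)) = ∑' i, m' i • opAdj (Λ i) (Θ i g)) →
      m = m' := by
  intro m m' hm hm' hmult
  obtain ⟨A, B, hA, -, hAB⟩ := hriesz
  have hq : 0 < 1 / q :=
    (Real.holderConjugate_iff.mpr ⟨hp, by simpa only [one_div] using hpq⟩).symm.one_div_pos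
  have hq' : 0 < q := one_div_pos.mp hq
  have hsummable : ∀ c : ℕ → ℝ, (∃ C, ∀ i, |c i| ≤ C) → ∀ g : StrongDual ℝ X₁,
      Summable fun i => opAdj (Λ i) (c i • Θ i g) := fun c hc g =>
    summable_of_norm_sum_le_mul_rpow hq
      (summable_norm_smul_rpow hq'.le hc (hΘ g).1) fun s => (hAB s _).2
  funext j
  by_contra hne
  obtain ⟨g, hg⟩ : ∃ g, Θ j g ≠ 0 := by
    simpa [ContinuousLinearMap.ext_iff] using hΘne j
  have hdiff : HasSum (fun i => opAdj (Λ i) ((m i - m' i) • Θ i g)) 0 := by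
    have := (hsummable m hm g).hasSum.sub (hsummable m' hm' g).hasSum
    simpa only [map_smul, hmult g, sub_self, sub_smul (M := StrongDual ℝ X₂)] using this
  have hcoeff := eq_zero_of_hasSum_zero_of_le_norm_sum hA hq' (fun i => norm_nonneg _)
    hdiff (fun s => (hAB s _).1) j
  exact hg ((smul_eq_zero.mp (norm_eq_zero.mp hcoeff)).resolve_left (sub_ne_zero.mpr hne))

/-- if `Λ` is a qg-Riesz basis for `X₂*` and `Θ` is a qg-Bessel sequence
for `X₁*` with all `Θᵢ ≠ 0`, then `m ↦ M_{m,Λ,Θ}` is injective from `ℓ^∞` into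
`B(X₁*, X₂*)`. -/
theorem multiplier_symbol_injective
    {X₁ X₂ : Type*} [NormedAddCommGroup X₁] [NormedSpace ℝ X₁] [CompleteSpace X₁]
    [NormedAddCommGroup X₂] [NormedSpace ℝ X₂] [CompleteSpace X₂]
    {Y : ℕ → Type*} [∀ i, NormedAddCommGroup (Y i)] [∀ i, NormedSpace ℝ (Y i)]
    [∀ i, CompleteSpace (Y i)]
    (hreflX₁ : Function.Surjective (inclusionInDoubleDual ℝ X₁))
    (hreflX₂ : Function.Surjective (inclusionInDoubleDual ℝ X₂))
    (hreflY : ∀ i, Function.Surjective (inclusionInDoubleDual ℝ (Y i)))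
    (p q : ℝ) (hp : 1 < p) (hpq : 1 / p + 1 / q = 1)
    (Λ : ∀ i, X₂ →L[ℝ] Y i) (Θ : ∀ i, StrongDual ℝ X₁ →L[ℝ] StrongDual ℝ (Y i))
    -- `Λ` is a qg-Riesz basis for `X₂*`
    (hcomplete : ∀ x : X₂, (∀ i, Λ i x = 0) → x = 0)
    (hriesz : ∃ A B : ℝ, 0 < A ∧ 0 < B ∧
      ∀ (s : Finset ℕ) (g : ∀ i, StrongDual ℝ (Y i)),
        A * (∑ i ∈ s, ‖g i‖ ^ q) ^ (1 / q) ≤ ‖∑ i ∈ s, opAdj (Λ i) (g i)‖ ∧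
        ‖∑ i ∈ s, opAdj (Λ i) (g i)‖ ≤ B * (∑ i ∈ s, ‖g i‖ ^ q) ^ (1 / q))
    -- `Θ` is a qg-Bessel sequence for `X₁*` with nonzero members
    (BΘ : ℝ) (hBΘ : 0 < BΘ)
    (hΘ : ∀ g : StrongDual ℝ X₁, Summable (fun i => ‖Θ i g‖ ^ q) ∧
      (∑' i, ‖Θ i g‖ ^ q) ^ (1 / q) ≤ BΘ * ‖g‖)
    (hΘne : ∀ i, Θ i ≠ 0) :
    ∀ m m' : ℕ → ℝ, (∃ M, ∀ i, |m i| ≤ M) → (∃ M', ∀ i, |m' i| ≤ M') →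
      (∀ g : StrongDual ℝ X₁,
        (∑' i, m i • opAdj (Λ i) (Θ i g)) = ∑' i, m' i • opAdj (Λ i) (Θ i g)) →
      m = m' :=
  multiplier_symbol_injective_general p q hp hpq Λ Θ hriesz BΘ hΘ hΘne
end
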